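/- arXiv:1505.06547 — 9 statements merged into one kernel-verified Lean document; each statement's English description precedes it below -/
import Mathlib

section
/- Let (X,d) and (Y,d') be compact metric spaces, Λ a finite nonempty set, and let 𝓕 = {X; f_λ | λ ∈ Λ} and 𝓖 = {Y; g_λ | λ ∈ Λ} be two parameterized IFS that are topologically conjugate via a homeomorphism h : X → Y (i.e. g_λ = h ∘ f_λ ∘ h⁻¹ for all λ ∈ Λ). Suppose there exist positive real numbers K and L such that L·d(p,q) < d'(h(p),h(q)) < K·d(p,q) for all p ≠ q in X. Then 𝓕 has the average shadowing property if and only if 𝓖 has the average shadowing property. -/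
open Filter Finset

/-- Composition along σ: `IFSIter f σ n = f (σ (n-1)) ∘ ⋯ ∘ f (σ 0)`, with `IFSIter f σ 0 = id`. -/
def IFSIter {X : Type*} {Λ : Type*} (f : Λ → X → X) (σ : ℕ → Λ) : ℕ → X → X
  | 0 => id
  | n + 1 => f (σ n) ∘ IFSIter f σ n

/-- `(x i)` is a δ-average pseudo-orbit of the IFS `f`. -/
def IsAvgPseudoOrbit {X : Type*} [MetricSpace X] {Λ : Type*}
    (f : Λ → X → X) (δ : ℝ) (x : ℕ → X) : Prop :=
  ∃ N : ℕ, ∃ σ : ℕ → Λ, ∀ n : ℕ, N ≤ n →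
    (1 / n : ℝ) * ∑ i ∈ Finset.range n, dist (f (σ i) (x i)) (x (i + 1)) < δ

/-- `(x i)` is ε-shadowed in average by the point `z`. -/
def AvgShadowedBy {X : Type*} [MetricSpace X] {Λ : Type*}
    (f : Λ → X → X) (ε : ℝ) (x : ℕ → X) (z : X) : Prop :=
  ∃ σ : ℕ → Λ,
    Filter.limsup (fun n : ℕ =>
      (1 / n : ℝ) * ∑ i ∈ Finset.range n, dist (IFSIter f σ i z) (x i)) Filter.atTop < ε

/-- The IFS `f` has the average shadowing property. -/
def HasAvgShadowing {X : Type*} [MetricSpace X] {Λ : Type*} (f : Λ → X → X) : Prop :=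
  ∀ ε : ℝ, 0 < ε → ∃ δ : ℝ, 0 < δ ∧
    ∀ x : ℕ → X, IsAvgPseudoOrbit f δ x → ∃ z : X, AvgShadowedBy f ε x z

/-- An ε-chain of the IFS `f` from `x` to `y`. -/
def IsEpsChain {X : Type*} [MetricSpace X] {Λ : Type*}
    (f : Λ → X → X) (ε : ℝ) (x y : X) : Prop :=
  ∃ n : ℕ, 0 < n ∧ ∃ p : ℕ → X, ∃ lam : ℕ → Λ,
    p 0 = x ∧ p n = y ∧ ∀ i < n, dist (f (lam i) (p i)) (p (i + 1)) ≤ ε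

/-- `x` is a chain recurrent point of the IFS `f`. -/
def ChainRecurrentPt {X : Type*} [MetricSpace X] {Λ : Type*}
    (f : Λ → X → X) (x : X) : Prop :=
  ∀ ε : ℝ, 0 < ε → IsEpsChain f ε x x


lemma IFSIter_conj {X Y : Type*} [TopologicalSpace X] [TopologicalSpace Y] {Λ : Type*} (f : Λ → X → X) (g : Λ → Y → Y)
    (h : X ≃ₜ Y) (hconj : ∀ l : Λ, g l = h ∘ f l ∘ h.symm) (σ : ℕ → Λ) (z : X) :
    ∀ n, IFSIter g σ n (h z) = h (IFSIter f σ n z) := by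
  intro n
  induction n with
  | zero => rfl
  | succ n ih => simp [IFSIter, ih, hconj (σ n)]

lemma avgShadowing_transfer {X Y : Type*} [MetricSpace X] [MetricSpace Y] [CompactSpace Y]
    {Λ : Type*} (f : Λ → X → X) (g : Λ → Y → Y)
    (h : X ≃ₜ Y) (hconj : ∀ l : Λ, g l = h ∘ f l ∘ h.symm)
    {K L : ℝ} (hK : 0 < K) (hL : 0 < L)
    (hup : ∀ p q : X, dist (h p) (h q) ≤ K * dist p q)
    (hlow : ∀ p q : X, L * dist p q ≤ dist (h p) (h q))
    (hg : HasAvgShadowing g) : HasAvgShadowing f := by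
  intro ε hε
  obtain ⟨δ, hδ, hshad⟩ := hg (L * ε) (by positivity)
  refine ⟨δ / K, by positivity, ?_⟩
  intro x hx
  obtain ⟨N, σ, hpo⟩ := hx
  have hpoY : IsAvgPseudoOrbit g δ (fun i => h (x i)) := by
    refine ⟨N, σ, fun n hn => ?_⟩
    have h1 : ∑ i ∈ Finset.range n, dist (g (σ i) (h (x i))) (h (x (i+1)))
        ≤ ∑ i ∈ Finset.range n, K * dist (f (σ i) (x i)) (x (i+1)) := by
      refine Finset.sum_le_sum fun i _ => ?_
      rw [hconj (σ i)]
      simpa using hup (f (σ i) (x i)) (x (i+1))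
    calc (1/n : ℝ) * ∑ i ∈ Finset.range n, dist (g (σ i) (h (x i))) (h (x (i+1)))
        ≤ (1/n : ℝ) * ∑ i ∈ Finset.range n, K * dist (f (σ i) (x i)) (x (i+1)) :=
          mul_le_mul_of_nonneg_left h1 (by positivity)
      _ = K * ((1/n : ℝ) * ∑ i ∈ Finset.range n, dist (f (σ i) (x i)) (x (i+1))) := by
          rw [← Finset.mul_sum]; ring
      _ < K * (δ / K) := mul_lt_mul_of_pos_left (hpo n hn) hK
      _ = δ := by field_simp
  obtain ⟨w, τ, hlim⟩ := hshad _ hpoY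
  refine ⟨h.symm w, τ, ?_⟩
  set uY : ℕ → ℝ := fun n =>
    (1/n : ℝ) * ∑ i ∈ Finset.range n, dist (IFSIter g τ i w) (h (x i)) with huY
  set uX : ℕ → ℝ := fun n =>
    (1/n : ℝ) * ∑ i ∈ Finset.range n, dist (IFSIter f τ i (h.symm w)) (x i) with huX
  obtain ⟨C, hC⟩ := Metric.isBounded_iff.mp (isCompact_univ (X := Y)).isBounded
  have hC0 : (0:ℝ) ≤ C := by
    simpa using hC (Set.mem_univ (h (x 0))) (Set.mem_univ (h (x 0)))
  have hYbd : ∀ n, uY n ≤ C := by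
    intro n
    rcases Nat.eq_zero_or_pos n with rfl | hn
    · simpa [huY] using hC0
    · have hs : ∑ i ∈ Finset.range n, dist (IFSIter g τ i w) (h (x i)) ≤ n * C := by
        calc ∑ i ∈ Finset.range n, dist (IFSIter g τ i w) (h (x i))
            ≤ ∑ _i ∈ Finset.range n, C :=
              Finset.sum_le_sum fun i _ => hC (Set.mem_univ _) (Set.mem_univ _)
          _ = n * C := by simp [mul_comm]
      have hn' : (0:ℝ) < n := by exact_mod_cast hn
      calc uY n ≤ (1/n : ℝ) * (n * C) :=
            mul_le_mul_of_nonneg_left hs (by positivity)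
        _ = C := by field_simp
  have hbdd : Filter.IsBoundedUnder (· ≤ ·) Filter.atTop uY :=
    Filter.isBoundedUnder_of ⟨C, hYbd⟩
  obtain ⟨c, hc1, hc2⟩ := exists_between hlim
  have hev : ∀ᶠ n in Filter.atTop, uY n < c :=
    Filter.eventually_lt_of_limsup_lt hc1 hbdd
  have hXY : ∀ n, uX n ≤ (1/L) * uY n := by
    intro n
    have hs : ∑ i ∈ Finset.range n, dist (IFSIter f τ i (h.symm w)) (x i)
        ≤ ∑ i ∈ Finset.range n, (1/L) * dist (IFSIter g τ i w) (h (x i)) := by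
      refine Finset.sum_le_sum fun i _ => ?_
      have key : IFSIter g τ i w = h (IFSIter f τ i (h.symm w)) := by
        have := IFSIter_conj f g h hconj τ (h.symm w) i
        simpa using this
      rw [key, one_div, ← div_eq_inv_mul, le_div_iff₀ hL, mul_comm]
      exact hlow (IFSIter f τ i (h.symm w)) (x i)
    calc uX n ≤ (1/n : ℝ) * ∑ i ∈ Finset.range n, (1/L) * dist (IFSIter g τ i w) (h (x i)) :=
          mul_le_mul_of_nonneg_left hs (by positivity)
      _ = (1/L) * uY n := by rw [huY]; rw [← Finset.mul_sum]; ring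
  have hevX : ∀ᶠ n in Filter.atTop, uX n ≤ c / L := by
    filter_upwards [hev] with n hn
    calc uX n ≤ (1/L) * uY n := hXY n
      _ ≤ (1/L) * c := mul_le_mul_of_nonneg_left hn.le (by positivity)
      _ = c / L := by ring
  have hXnonneg : ∀ n, 0 ≤ uX n := fun n => by
    apply mul_nonneg (by positivity)
    exact Finset.sum_nonneg fun i _ => dist_nonneg
  have hcob : Filter.IsCoboundedUnder (· ≤ ·) Filter.atTop uX :=
    (Filter.isBoundedUnder_of ⟨0, hXnonneg⟩ :
      Filter.IsBoundedUnder (· ≥ ·) Filter.atTop uX).isCoboundedUnder_le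
  have : Filter.limsup uX Filter.atTop ≤ c / L := Filter.limsup_le_of_le hcob hevX
  have hfin : c / L < ε := by
    rw [div_lt_iff₀ hL]; nlinarith
  exact lt_of_le_of_lt this hfin

/-- average shadowing is preserved by a bi-Lipschitz-type topological
conjugacy between IFS on compact metric spaces. -/
theorem conjugate_avgShadowing_iff
    {X Y : Type*} [MetricSpace X] [MetricSpace Y] [CompactSpace X] [CompactSpace Y]
    {Λ : Type*} [Finite Λ] [Nonempty Λ]
    (f : Λ → X → X) (hf : ∀ l : Λ, Continuous (f l))
    (g : Λ → Y → Y)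
    (h : X ≃ₜ Y) (hconj : ∀ l : Λ, g l = h ∘ f l ∘ h.symm)
    (K L : ℝ) (hK : 0 < K) (hL : 0 < L)
    (hKL : ∀ p q : X, p ≠ q →
      L * dist p q < dist (h p) (h q) ∧ dist (h p) (h q) < K * dist p q) :
    HasAvgShadowing f ↔ HasAvgShadowing g := by
  constructor
  · intro hF
    have hup : ∀ p q : Y, dist (h.symm p) (h.symm q) ≤ (1/L) * dist p q := by
      intro p q
      rcases eq_or_ne (h.symm p) (h.symm q) with he | he
      · rw [he]; simp; positivity
      · have := (hKL _ _ he).1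
        simp only [h.apply_symm_apply] at this
        rw [one_div, ← div_eq_inv_mul, le_div_iff₀ hL, mul_comm]
        exact this.le
    have hlow : ∀ p q : Y, (1/K) * dist p q ≤ dist (h.symm p) (h.symm q) := by
      intro p q
      rcases eq_or_ne (h.symm p) (h.symm q) with he | he
      · have : p = q := by
          have := congrArg h he; simpa using this
        simp [he, this]
      · have := (hKL _ _ he).2
        simp only [h.apply_symm_apply] at this
        rw [one_div, ← div_eq_inv_mul, div_le_iff₀ hK]
        nlinarith
    exact avgShadowing_transfer g f h.symm
      (fun l => by funext y; simp [hconj l])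
      (by positivity : (0:ℝ) < 1/L) (by positivity : (0:ℝ) < 1/K) hup hlow hF
  · intro hG
    have hup : ∀ p q : X, dist (h p) (h q) ≤ K * dist p q := by
      intro p q
      rcases eq_or_ne p q with rfl | he
      · simp
      · exact (hKL p q he).2.le
    have hlow : ∀ p q : X, L * dist p q ≤ dist (h p) (h q) := by
      intro p q
      rcases eq_or_ne p q with rfl | he
      · simp
      · exact (hKL p q he).1.le
    exact avgShadowing_transfer f g h hconj hK hL hup hlow hG
end

section
/- If a parameterized IFS 𝓕 = {X; f_λ | λ ∈ Λ} on a metric space (X,d) is uniformly contracting (with contracting ratio β < 1), then 𝓕 has the average shadowing property. -/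
open Filter Finset

/-- a uniformly contracting parameterized IFS has the average
shadowing property. -/
theorem uniformlyContracting_hasAvgShadowing
    {X : Type*} [MetricSpace X] {Λ : Type*} [Finite Λ] [Nonempty Λ]
    (f : Λ → X → X) (β : ℝ) (hβ : β < 1)
    (hcontr : ∀ (l : Λ) (x y : X), dist (f l x) (f l y) ≤ β * dist x y) :
    HasAvgShadowing f := by
  set γ := max β 0 with hγdef
  have hγ0 : (0:ℝ) ≤ γ := le_max_right _ _
  have hγ1 : γ < 1 := max_lt hβ one_pos
  have h1γ : (0:ℝ) < 1 - γ := by linarith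
  have hc : ∀ (l : Λ) (x y : X), dist (f l x) (f l y) ≤ γ * dist x y := fun l x y =>
    (hcontr l x y).trans (mul_le_mul_of_nonneg_right (le_max_left _ _) dist_nonneg)
  intro ε hε
  refine ⟨ε * (1 - γ) / 2, by positivity, ?_⟩
  rintro x ⟨N, σ, hN⟩
  refine ⟨x 0, σ, ?_⟩
  set a : ℕ → ℝ := fun i => dist (IFSIter f σ i (x 0)) (x i) with ha
  set e : ℕ → ℝ := fun i => dist (f (σ i) (x i)) (x (i+1)) with he
  have ha0 : a 0 = 0 := by simp [ha, IFSIter]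
  have hanneg : ∀ i, 0 ≤ a i := fun i => dist_nonneg
  have henneg : ∀ i, 0 ≤ e i := fun i => dist_nonneg
  have hrec : ∀ i, a (i+1) ≤ γ * a i + e i := by
    intro i
    calc a (i+1) = dist (f (σ i) (IFSIter f σ i (x 0))) (x (i+1)) := rfl
    _ ≤ dist (f (σ i) (IFSIter f σ i (x 0))) (f (σ i) (x i)) + dist (f (σ i) (x i)) (x (i+1)) :=
        dist_triangle _ _ _
    _ ≤ γ * a i + e i := by
        have := hc (σ i) (IFSIter f σ i (x 0)) (x i)
        exact add_le_add this le_rfl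
  set S : ℕ → ℝ := fun n => ∑ i ∈ Finset.range n, a i with hS
  set E : ℕ → ℝ := fun n => ∑ i ∈ Finset.range n, e i with hE
  have hSmono : ∀ n, S n ≤ S (n+1) := by
    intro n
    simp only [hS, Finset.sum_range_succ]
    exact le_add_of_nonneg_right (hanneg n)
  have hSE : ∀ n, (1 - γ) * S n ≤ E n := by
    intro n
    cases n with
    | zero => simp [hS, hE]
    | succ m =>
      have h1 : S (m+1) ≤ γ * S m + E m := by
        have : S (m+1) = ∑ i ∈ Finset.range m, a (i+1) + a 0 := Finset.sum_range_succ' a m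
        rw [this, ha0, add_zero]
        calc ∑ i ∈ Finset.range m, a (i+1) ≤ ∑ i ∈ Finset.range m, (γ * a i + e i) :=
              Finset.sum_le_sum fun i _ => hrec i
        _ = γ * S m + E m := by rw [Finset.sum_add_distrib, Finset.mul_sum]
      have h2 : γ * S m ≤ γ * S (m+1) := mul_le_mul_of_nonneg_left (hSmono m) hγ0
      have h3 : E m ≤ E (m+1) := by
        simp only [hE, Finset.sum_range_succ]
        exact le_add_of_nonneg_right (henneg m)
      nlinarith
  have key : ∀ n : ℕ, max N 1 ≤ n →
      (1 / n : ℝ) * ∑ i ∈ Finset.range n, dist (IFSIter f σ i (x 0)) (x i) ≤ ε / 2 := by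
    intro n hn
    have hn1 : 1 ≤ n := le_trans (le_max_right _ _) hn
    have hnpos : (0:ℝ) < n := by exact_mod_cast hn1
    have hEn : (1 / n : ℝ) * E n < ε * (1 - γ) / 2 := hN n (le_trans (le_max_left _ _) hn)
    have h4 : (1 / n : ℝ) * ((1 - γ) * S n) ≤ (1 / n : ℝ) * E n :=
      mul_le_mul_of_nonneg_left (hSE n) (by positivity)
    have h5 : (1 / n : ℝ) * ((1 - γ) * S n) < ε * (1 - γ) / 2 := lt_of_le_of_lt h4 hEn
    have : (1 / n : ℝ) * S n ≤ ε / 2 := by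
      nlinarith [mul_pos (show (0:ℝ) < 1/n by positivity) h1γ]
    exact this
  have hbound : ∀ᶠ n in Filter.atTop, (fun n : ℕ =>
      (1 / n : ℝ) * ∑ i ∈ Finset.range n, dist (IFSIter f σ i (x 0)) (x i)) n ≤ ε / 2 :=
    Filter.eventually_atTop.2 ⟨max N 1, key⟩
  have hcob : Filter.IsCoboundedUnder (· ≤ ·) Filter.atTop (fun n : ℕ =>
      (1 / n : ℝ) * ∑ i ∈ Finset.range n, dist (IFSIter f σ i (x 0)) (x i)) :=
    Filter.isCoboundedUnder_le_of_le _ (x := 0) fun n => by positivity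
  calc Filter.limsup _ Filter.atTop ≤ ε / 2 := Filter.limsup_le_of_le hcob hbound
  _ < ε := by linarith
end

section
/- Let 𝓕 = {X; f_λ | λ ∈ Λ} be a uniformly contracting parameterized IFS with contracting ratio β < 1 on a metric space (X,d). Let σ = (λ_0, λ_1, …) ∈ Λ^ℕ, let (x_i)_{i≥0} be any sequence in X, and let (y_i)_{i≥0} satisfy y_{i+1} = f_{λ_i}(y_i) for all i ≥ 0. Set α_i = d(f_{λ_i}(x_i), x_{i+1}) and M = d(x_0, y_0). Then for every n ≥ 1, ∑_{i=0}^{n−1} d(x_i, y_i) ≤ (1/(1−β))·(M + ∑_{i=0}^{n−2} α_i). -/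
open Filter Finset

/-- summed estimate, for a uniformly contracting IFS, of the distance
between an arbitrary sequence and a true orbit driven by the same symbol sequence. -/
theorem contracting_summed_estimate
    {X : Type*} [MetricSpace X] {Λ : Type*} [Finite Λ] [Nonempty Λ]
    (f : Λ → X → X) (β : ℝ) (hβ : β < 1)
    (hcontr : ∀ (l : Λ) (x y : X), dist (f l x) (f l y) ≤ β * dist x y)
    (σ : ℕ → Λ) (x y : ℕ → X)
    (hy : ∀ i : ℕ, y (i + 1) = f (σ i) (y i))
    (n : ℕ) (hn : 1 ≤ n) :
    ∑ i ∈ Finset.range n, dist (x i) (y i) ≤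
      (1 / (1 - β)) * (dist (x 0) (y 0) +
        ∑ i ∈ Finset.range (n - 1), dist (f (σ i) (x i)) (x (i + 1))) := by
  have hb1 : (0:ℝ) < 1 - β := by linarith
  rcases le_or_gt 0 β with hβ0 | hβ0
  · obtain ⟨m, rfl⟩ : ∃ m, n = m + 1 := ⟨n - 1, by omega⟩
    simp only [Nat.add_sub_cancel]
    set S := ∑ i ∈ Finset.range (m + 1), dist (x i) (y i) with hS
    set A := ∑ i ∈ Finset.range m, dist (f (σ i) (x i)) (x (i + 1)) with hA
    have key : S ≤ dist (x 0) (y 0) + A + β * ∑ i ∈ Finset.range m, dist (x i) (y i) := by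
      rw [hS, Finset.sum_range_succ']
      have hterm : ∀ i ∈ Finset.range m,
          dist (x (i + 1)) (y (i + 1)) ≤
            dist (f (σ i) (x i)) (x (i + 1)) + β * dist (x i) (y i) := by
        intro i _
        rw [hy i]
        calc dist (x (i + 1)) (f (σ i) (y i))
            ≤ dist (x (i + 1)) (f (σ i) (x i)) + dist (f (σ i) (x i)) (f (σ i) (y i)) :=
              dist_triangle _ _ _
          _ ≤ dist (f (σ i) (x i)) (x (i + 1)) + β * dist (x i) (y i) := by
              rw [dist_comm (x (i + 1))]
              gcongr
              exact hcontr _ _ _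
      have hsum := Finset.sum_le_sum hterm
      rw [Finset.sum_add_distrib, ← Finset.mul_sum] at hsum
      linarith
    have hmono : ∑ i ∈ Finset.range m, dist (x i) (y i) ≤ S := by
      rw [hS, Finset.sum_range_succ]
      exact le_add_of_nonneg_right dist_nonneg
    have hβS : β * ∑ i ∈ Finset.range m, dist (x i) (y i) ≤ β * S :=
      mul_le_mul_of_nonneg_left hmono hβ0
    rw [one_div, inv_mul_eq_div, le_div_iff₀ hb1]
    nlinarith
  · have hsub : ∀ a b : X, dist a b = 0 := by
      intro a b
      have l : Λ := Classical.arbitrary Λ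
      have h1 := hcontr l a b
      have h2 : (0:ℝ) ≤ dist (f l a) (f l b) := dist_nonneg
      have h3 : (0:ℝ) ≤ dist a b := dist_nonneg
      nlinarith
    have hL : ∀ (k : ℕ) (g h : ℕ → X), ∑ i ∈ Finset.range k, dist (g i) (h i) = 0 := by
      intro k g h
      simp [hsub]
    rw [hL]
    have : ∑ i ∈ Finset.range (n - 1), dist (f (σ i) (x i)) (x (i + 1)) = 0 := by
      simp [hsub]
    rw [this, hsub]
    simp
end

section
/- Let 0 < a < 1 and let F_1 and F_2 be homeomorphisms of [0,1] such that 0, a and 1 are fixed points of both F_1 and F_2, and F_1(t) > t and F_2(t) > t for all t ∈ [0,1] \ {0, a, 1}. Let f_1 and f_2 be the induced homeomorphisms of the circle S¹ = ℝ/ℤ. Then the IFS 𝓕 = {S¹; f_1, f_2} does not have the average shadowing property. -/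
open Filter Finset

/-!
Both maps fix `0` and `a` and push every other point of `[0, 1)` forwards, so along any word `σ`
the lifted orbit in `[0, 1)` is nondecreasing and bounded: every orbit of the IFS converges.
The sequence staying `m` steps at `0`, then `m` steps at `a`, and so on, is a
`dist 0 a / m`-average pseudo-orbit. A convergent sequence `yₙ → y` cannot shadow it in average
within `dist 0 a / 2`: since `x (i + m)` and `x i` are `0` and `a` in some order,
`dist y (x i) + dist y (x (i + m)) ≥ dist 0 a`, so the averages of `dist y (x i)` approach at
least `dist 0 a / 2`, while by Cesàro the averages of `dist yₙ y` tend to `0`.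
-/

open scoped Topology

variable {X Λ : Type*}

section Iterate

variable (f : Λ → X → X) (σ : ℕ → Λ)

@[simp]
lemma ifsIter_succ (n : ℕ) (x : X) : IFSIter f σ (n + 1) x = f (σ n) (IFSIter f σ n x) := rfl

lemma mapsTo_ifsIter {s : Set X} (hmaps : ∀ l, Set.MapsTo (f l) s s) (n : ℕ) :
    Set.MapsTo (IFSIter f σ n) s s := by
  induction n with
  | zero => exact Set.mapsTo_id s
  | succ n ih => exact (hmaps (σ n)).comp ih

lemma ifsIter_semiconj {Y : Type*} {F : Λ → Y → Y} {g : Y → X} {s : Set Y}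
    (hmaps : ∀ l, Set.MapsTo (F l) s s) (hg : ∀ l, ∀ y ∈ s, g (F l y) = f l (g y))
    (n : ℕ) {y : Y} (hy : y ∈ s) : g (IFSIter F σ n y) = IFSIter f σ n (g y) := by
  induction n with
  | zero => rfl
  | succ n ih => rw [ifsIter_succ, ifsIter_succ, hg _ _ (mapsTo_ifsIter F σ hmaps n hy), ih]

lemma monotone_ifsIter {α : Type*} [Preorder α] {F : Λ → α → α} {s : Set α}
    (hmaps : ∀ l, Set.MapsTo (F l) s s) (hle : ∀ l, ∀ t ∈ s, t ≤ F l t) {t : α} (ht : t ∈ s) :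
    Monotone fun n ↦ IFSIter F σ n t :=
  monotone_nat_of_le_succ fun n ↦ hle _ _ (mapsTo_ifsIter F σ hmaps n ht)

end Iterate

lemma avg_le_of_le {u : ℕ → ℝ} {C : ℝ} (hC : 0 ≤ C) (hu : ∀ i, u i ≤ C) (n : ℕ) :
    (1 / n : ℝ) * ∑ i ∈ range n, u i ≤ C := by
  rcases n.eq_zero_or_pos with rfl | hn
  · simpa using hC
  calc (1 / n : ℝ) * ∑ i ∈ range n, u i ≤ (1 / n : ℝ) * (n * C) := by
        gcongr
        simpa using sum_le_sum (s := range n) fun i _ ↦ hu i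
    _ = C := by field_simp

section Shadowing

variable [MetricSpace X]

lemma sub_mul_le_two_mul_sum_dist {x : ℕ → X} {m : ℕ} {D : ℝ}
    (hx : ∀ i, D ≤ dist (x i) (x (i + m))) (q : X) {n : ℕ} (hmn : m ≤ n) :
    ((n : ℝ) - m) * D ≤ 2 * ∑ i ∈ range n, dist q (x i) := by
  obtain ⟨k, rfl⟩ := Nat.exists_eq_add_of_le' hmn
  have hpair : ∀ i, D ≤ dist q (x i) + dist q (x (m + i)) := fun i ↦ by
    rw [add_comm m, dist_comm q]
    exact (hx i).trans (dist_triangle _ _ _)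
  have hhead : ∑ i ∈ range k, dist q (x i) ≤ ∑ i ∈ range (k + m), dist q (x i) := by
    rw [sum_range_add]
    exact le_add_of_nonneg_right (sum_nonneg fun _ _ ↦ dist_nonneg)
  have htail : ∑ i ∈ range k, dist q (x (m + i)) ≤ ∑ i ∈ range (k + m), dist q (x i) := by
    rw [add_comm k, sum_range_add]
    exact le_add_of_nonneg_left (sum_nonneg fun _ _ ↦ dist_nonneg)
  have hsum := card_nsmul_le_sum (range k) _ D fun i _ ↦ hpair i
  rw [card_range, nsmul_eq_mul, sum_add_distrib] at hsum
  push_cast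
  linarith

-- Without `BoundedSpace` the averages may be unbounded, and then `limsup` in `ℝ` is a junk value.
lemma le_limsup_avg_dist [BoundedSpace X] {y x : ℕ → X} {q : X} {m : ℕ} {D : ℝ}
    (hy : Tendsto y atTop (𝓝 q)) (hx : ∀ i, D ≤ dist (x i) (x (i + m))) :
    D / 2 ≤ limsup (fun n : ℕ ↦ (1 / n : ℝ) * ∑ i ∈ range n, dist (y i) (x i)) atTop := by
  set lower : ℕ → ℝ := fun n ↦
    (1 - m / n) * (D / 2) - (n⁻¹ : ℝ) * ∑ i ∈ range n, dist (y i) q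
  have hlower : Tendsto lower atTop (𝓝 (D / 2)) := by
    have hcesaro := (tendsto_iff_dist_tendsto_zero.mp hy).cesaro
    have hratio := tendsto_const_div_atTop_nhds_zero_nat (m : ℝ)
    simpa [lower] using
      (((tendsto_const_nhds (x := (1 : ℝ))).sub hratio).mul_const (D / 2)).sub hcesaro
  have hle : lower ≤ᶠ[atTop] fun n ↦ (1 / n : ℝ) * ∑ i ∈ range n, dist (y i) (x i) := by
    filter_upwards [eventually_ge_atTop (max m 1)] with n hn
    have hn0 : (0 : ℝ) < n := by exact_mod_cast (le_max_right m 1).trans hn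
    have hpairs := sub_mul_le_two_mul_sum_dist hx q ((le_max_left m 1).trans hn)
    have htriangle : ∑ i ∈ range n, dist q (x i) ≤
        ∑ i ∈ range n, dist (y i) q + ∑ i ∈ range n, dist (y i) (x i) := by
      rw [← sum_add_distrib]
      exact sum_le_sum fun i _ ↦ dist_comm q (y i) ▸ dist_triangle _ _ _
    have hsplit : lower n =
        (1 / n : ℝ) * (((n : ℝ) - m) * D / 2 - ∑ i ∈ range n, dist (y i) q) := by
      simp only [lower]
      field_simp
    rw [hsplit]
    gcongr
    linarith
  obtain ⟨C, hC⟩ := Metric.boundedSpace_iff.mp ‹BoundedSpace X›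
  have hbdd : IsBoundedUnder (· ≤ ·) atTop
      fun n : ℕ ↦ (1 / n : ℝ) * ∑ i ∈ range n, dist (y i) (x i) :=
    isBoundedUnder_of ⟨C, avg_le_of_le (dist_nonneg.trans (hC q q)) fun i ↦ hC _ _⟩
  calc D / 2 = limsup lower atTop := hlower.limsup_eq.symm
    _ ≤ _ := limsup_le_limsup hle hlower.isCoboundedUnder_le hbdd

def blockAlternating (p q : X) (m i : ℕ) : X := if Even (i / m) then p else q

lemma dist_blockAlternating_le (p q : X) (m i j : ℕ) :
    dist (blockAlternating p q m i) (blockAlternating p q m j) ≤ dist p q := by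
  unfold blockAlternating
  split_ifs <;> simp [dist_comm p q]

lemma dist_blockAlternating_add_self (p q : X) {m : ℕ} (hm : 0 < m) (i : ℕ) :
    dist (blockAlternating p q m i) (blockAlternating p q m (i + m)) = dist p q := by
  unfold blockAlternating
  rw [Nat.add_div_right i hm]
  split_ifs <;> simp_all [Nat.even_add_one, dist_comm p q]

lemma sum_dist_blockAlternating_succ_le (p q : X) (m n : ℕ) :
    ∑ i ∈ range n, dist (blockAlternating p q m i) (blockAlternating p q m (i + 1)) ≤
      (n / m : ℕ) * dist p q := by
  induction n with
  | zero => simp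
  | succ n ih =>
    rw [sum_range_succ, Nat.succ_div]
    by_cases hdvd : m ∣ n + 1
    · push_cast [if_pos hdvd]
      linarith [dist_blockAlternating_le p q m n (n + 1)]
    · have hsame : blockAlternating p q m (n + 1) = blockAlternating p q m n := by
        simp only [blockAlternating, Nat.succ_div, if_neg hdvd, add_zero]
      simpa [if_neg hdvd, hsame] using ih

lemma isAvgPseudoOrbit_blockAlternating [Nonempty Λ] {f : Λ → X → X} {p q : X}
    (hp : ∀ l, f l p = p) (hq : ∀ l, f l q = q) {m : ℕ} {δ : ℝ} (hm : 0 < m)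
    (hδ : dist p q / m < δ) : IsAvgPseudoOrbit f δ (blockAlternating p q m) := by
  obtain ⟨l⟩ := ‹Nonempty Λ›
  have hfix : ∀ i, f l (blockAlternating p q m i) = blockAlternating p q m i := fun i ↦ by
    unfold blockAlternating
    split_ifs <;> simp [hp, hq]
  refine ⟨1, fun _ ↦ l, fun n hn ↦ lt_of_le_of_lt ?_ hδ⟩
  have hn0 : (0 : ℝ) < n := by exact_mod_cast hn
  simp only [hfix]
  calc _ ≤ (1 / n : ℝ) * ((n / m : ℕ) * dist p q) := by
        gcongr
        exact sum_dist_blockAlternating_succ_le p q m n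
    _ ≤ (1 / n : ℝ) * ((n / m : ℝ) * dist p q) := by
        gcongr
        exact Nat.cast_div_le
    _ = dist p q / m := by field_simp

theorem not_hasAvgShadowing_of_tendsto_ifsIter [BoundedSpace X] [Nonempty Λ] {f : Λ → X → X}
    {p q : X} (hpq : p ≠ q) (hp : ∀ l, f l p = p) (hq : ∀ l, f l q = q)
    (htendsto : ∀ σ z, ∃ y, Tendsto (fun n ↦ IFSIter f σ n z) atTop (𝓝 y)) :
    ¬ HasAvgShadowing f := by
  intro hshadowing
  have hD : 0 < dist p q := dist_pos.mpr hpq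
  obtain ⟨δ, hδ, hδshadow⟩ := hshadowing (dist p q / 2) (half_pos hD)
  obtain ⟨m, hm⟩ := exists_nat_gt (dist p q / δ)
  have hm0 : (0 : ℝ) < m := (div_pos hD hδ).trans hm
  obtain ⟨z, σ, hz⟩ := hδshadow _ (isAvgPseudoOrbit_blockAlternating hp hq (Nat.cast_pos.mp hm0)
    ((div_lt_iff₀ hm0).mpr ((div_lt_iff₀' hδ).mp hm)))
  obtain ⟨y, hy⟩ := htendsto σ z
  exact hz.not_ge (le_limsup_avg_dist hy
    fun i ↦ (dist_blockAlternating_add_self p q (Nat.cast_pos.mp hm0) i).ge)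

end Shadowing

lemma mapsTo_Ico_of_bijOn_Icc {α : Type*} [PartialOrder α] {F : α → α} {a b : α} (hab : a ≤ b)
    (hbij : Set.BijOn F (Set.Icc a b) (Set.Icc a b)) (hb : F b = b) :
    Set.MapsTo F (Set.Ico a b) (Set.Ico a b) := by
  intro t ht
  have hFt := hbij.mapsTo (Set.Ico_subset_Icc_self ht)
  refine ⟨hFt.1, hFt.2.lt_of_ne fun h ↦ ht.2.ne ?_⟩
  exact hbij.injOn (Set.Ico_subset_Icc_self ht) (Set.right_mem_Icc.mpr hab) (h.trans hb.symm)

lemma exists_tendsto_ifsIter_of_lift {p : ℝ} [Fact (0 < p)] {f : Λ → AddCircle p → AddCircle p}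
    {F : Λ → ℝ → ℝ} (hmaps : ∀ l, Set.MapsTo (F l) (Set.Ico 0 p) (Set.Ico 0 p))
    (hle : ∀ l, ∀ t ∈ Set.Ico 0 p, t ≤ F l t)
    (hlift : ∀ l, ∀ t ∈ Set.Ico 0 p, f l t = F l t) (σ : ℕ → Λ) (z : AddCircle p) :
    ∃ y, Tendsto (fun n ↦ IFSIter f σ n z) atTop (𝓝 y) := by
  obtain ⟨t, ht, rfl⟩ : ∃ t ∈ Set.Ico 0 p, (t : AddCircle p) = z :=
    ⟨AddCircle.equivIco p 0 z, by simpa using (AddCircle.equivIco p 0 z).2, AddCircle.coe_equivIco⟩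
  have hmono := monotone_ifsIter σ hmaps hle ht
  have hbdd : BddAbove (Set.range fun n ↦ IFSIter F σ n t) :=
    ⟨p, Set.forall_mem_range.mpr fun n ↦ (mapsTo_ifsIter F σ hmaps n ht).2.le⟩
  refine ⟨_, (((AddCircle.continuous_mk' p).tendsto _).comp
    (tendsto_atTop_ciSup hmono hbdd)).congr fun n ↦ ?_⟩
  exact ifsIter_semiconj f σ hmaps (fun l s hs ↦ (hlift l s hs).symm) n ht

theorem circle_not_avgShadowing_general
    (a : ℝ) (ha0 : 0 < a) (ha1 : a < 1)
    (F : Fin 2 → ℝ → ℝ)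
    (hbij : ∀ i : Fin 2, Set.BijOn (F i) (Set.Icc 0 1) (Set.Icc 0 1))
    (hF0 : ∀ i : Fin 2, F i 0 = 0) (hFa : ∀ i : Fin 2, F i a = a)
    (hF1 : ∀ i : Fin 2, F i 1 = 1)
    (hgt : ∀ i : Fin 2, ∀ t ∈ Set.Icc (0 : ℝ) 1, t ≠ 0 → t ≠ a → t ≠ 1 → t < F i t)
    (f : Fin 2 → AddCircle (1 : ℝ) → AddCircle (1 : ℝ))
    (hind : ∀ i : Fin 2, ∀ t ∈ Set.Ico (0 : ℝ) 1,
      f i ((t : ℝ) : AddCircle (1 : ℝ)) = ((F i t : ℝ) : AddCircle (1 : ℝ))) :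
    ¬ HasAvgShadowing f := by
  have haI : a ∈ Set.Ico (0 : ℝ) 1 := ⟨ha0.le, ha1⟩
  have hle : ∀ i, ∀ t ∈ Set.Ico (0 : ℝ) 1, t ≤ F i t := by
    intro i t ht
    rcases eq_or_ne t 0 with rfl | h0
    · rw [hF0]
    rcases eq_or_ne t a with rfl | hta
    · rw [hFa]
    exact (hgt i t (Set.Ico_subset_Icc_self ht) h0 hta ht.2.ne).le
  refine not_hasAvgShadowing_of_tendsto_ifsIter (p := 0) (q := (a : AddCircle (1 : ℝ)))
    ?_ (fun i ↦ ?_) (fun i ↦ ?_) (exists_tendsto_ifsIter_of_lift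
      (fun i ↦ mapsTo_Ico_of_bijOn_Icc zero_le_one (hbij i) (hF1 i)) hle hind)
  · exact Ne.symm ((AddCircle.coe_eq_zero_iff_of_mem_Ico haI).not.mpr ha0.ne')
  · simpa [hF0] using hind i 0 ⟨le_rfl, one_pos⟩
  · simpa [hFa] using hind i a haI

/-- for homeomorphisms `F 1, F 2` of `[0,1]` fixing `0, a, 1` and with
`F i t > t` elsewhere, the induced IFS on the circle `ℝ/ℤ` does not have the
average shadowing property. -/
theorem circle_not_avgShadowing
    (a : ℝ) (ha0 : 0 < a) (ha1 : a < 1)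
    (F : Fin 2 → ℝ → ℝ)
    (hbij : ∀ i : Fin 2, Set.BijOn (F i) (Set.Icc 0 1) (Set.Icc 0 1))
    (hcont : ∀ i : Fin 2, ContinuousOn (F i) (Set.Icc 0 1))
    (hF0 : ∀ i : Fin 2, F i 0 = 0) (hFa : ∀ i : Fin 2, F i a = a)
    (hF1 : ∀ i : Fin 2, F i 1 = 1)
    (hgt : ∀ i : Fin 2, ∀ t ∈ Set.Icc (0 : ℝ) 1, t ≠ 0 → t ≠ a → t ≠ 1 → t < F i t)
    (f : Fin 2 → AddCircle (1 : ℝ) → AddCircle (1 : ℝ))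
    (hfc : ∀ i : Fin 2, Continuous (f i))
    (hind : ∀ i : Fin 2, ∀ t ∈ Set.Ico (0 : ℝ) 1,
      f i ((t : ℝ) : AddCircle (1 : ℝ)) = ((F i t : ℝ) : AddCircle (1 : ℝ))) :
    ¬ HasAvgShadowing f :=
  circle_not_avgShadowing_general a ha0 ha1 F hbij hF0 hFa hF1 hgt f hind
end

section
/- Let 𝓕 = {X; f_λ | λ ∈ Λ} be a parameterized IFS on a compact metric space (X,d) in which every map f_λ is continuous and surjective. If 𝓕 has the average shadowing property, then every point x ∈ X is chain recurrent for 𝓕. -/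
open Filter Finset

section ChainAux

variable {X : Type*} [MetricSpace X] {Λ : Type*}

lemma chain_single (f : Λ → X → X) {ε : ℝ} {a b : X} (l : Λ)
    (h : dist (f l a) b ≤ ε) : IsEpsChain f ε a b := by
  refine ⟨1, one_pos, fun k => if k = 0 then a else b, fun _ => l, by simp, by simp, ?_⟩
  intro i hi
  have : i = 0 := by omega
  subst this
  simpa using h

lemma chain_extend {f : Λ → X → X} {ε : ℝ} {a b c : X} (h : IsEpsChain f ε a b) (l : Λ)
    (hd : dist (f l b) c ≤ ε) : IsEpsChain f ε a c := by
  obtain ⟨n, hn, p, lam, hp0, hpn, hstep⟩ := h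
  refine ⟨n + 1, by omega, fun k => if k = n + 1 then c else p k,
    fun k => if k = n then l else lam k, ?_, ?_, ?_⟩
  · show (if (0:ℕ) = n + 1 then c else p 0) = a
    rw [if_neg (by omega : ¬ ((0:ℕ) = n + 1))]; exact hp0
  · simp
  · intro k hk
    rcases Nat.lt_succ_iff_lt_or_eq.mp hk with h1 | h1
    · have e1 : ¬ (k = n + 1) := by omega
      have e2 : ¬ (k + 1 = n + 1) := by omega
      have e3 : ¬ (k = n) := by omega
      simp only [if_neg e1, if_neg e2, if_neg e3]
      exact hstep k h1
    · subst h1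
      have e1 : ¬ (k = k + 1) := by omega
      show dist (f (if k = k then l else lam k) (if k = k + 1 then c else p k))
          (if k + 1 = k + 1 then c else p (k+1)) ≤ ε
      rw [if_pos rfl, if_pos rfl, if_neg e1, hpn]
      exact hd

end ChainAux

set_option maxHeartbeats 1000000 in
/-- a continuous surjective IFS on a compact metric space with the
average shadowing property has every point chain recurrent. -/
theorem avgShadowing_chainRecurrent
    {X : Type*} [MetricSpace X] [CompactSpace X]
    {Λ : Type*} [Finite Λ] [Nonempty Λ]
    (f : Λ → X → X) (hc : ∀ l : Λ, Continuous (f l))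
    (hs : ∀ l : Λ, Function.Surjective (f l))
    (h : HasAvgShadowing f) :
    ∀ x : X, ChainRecurrentPt f x := by
  classical
  intro x ε hε
  -- uniform continuity modulus, uniform over the finite index set
  have hucont : ∀ l : Λ, ∃ η > (0:ℝ), ∀ a b : X, dist a b < η → dist (f l a) (f l b) < ε/2 := by
    intro l
    have hu : UniformContinuous (f l) := CompactSpace.uniformContinuous_of_continuous (hc l)
    obtain ⟨η, hη, hp⟩ := Metric.uniformContinuous_iff.mp hu (ε/2) (by positivity)
    exact ⟨η, hη, fun a b hab => hp hab⟩
  choose ηf hηf hprop using hucont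
  cases nonempty_fintype Λ
  set Η : ℝ := Finset.univ.inf' Finset.univ_nonempty ηf with hΗdef
  have hΗpos : 0 < Η := by
    rw [hΗdef, Finset.lt_inf'_iff]
    exact fun l _ => hηf l
  have hΗ : ∀ (l : Λ) (a b : X), dist a b < Η → dist (f l a) (f l b) < ε/2 := by
    intro l a b hab
    exact hprop l a b (lt_of_lt_of_le hab (Finset.inf'_le _ (Finset.mem_univ l)))
  set ρ : ℝ := min Η (ε/2) with hρdef
  have hρpos : 0 < ρ := lt_min hΗpos (by positivity)
  obtain ⟨δ, hδ, hshad⟩ := h (ρ/8) (by positivity)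
  -- diameter bound
  set D : ℝ := Metric.diam (Set.univ : Set X) with hDdef
  have hD0 : 0 ≤ D := Metric.diam_nonneg
  have hDd : ∀ a b : X, dist a b ≤ D :=
    fun a b => Metric.dist_le_diam_of_mem isCompact_univ.isBounded trivial trivial
  -- block length
  set L : ℕ := ⌈D/δ⌉₊ + 1 with hLdef
  have hL1 : 1 ≤ L := by omega
  set P : ℕ := 2 * L with hPdef
  have hP0 : 0 < P := by omega
  have hP2 : 2 ≤ P := by omega
  have hDL : D < δ * L := by
    have h1 : D / δ ≤ (⌈D/δ⌉₊ : ℝ) := Nat.le_ceil _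
    have h2 : D ≤ δ * (⌈D/δ⌉₊ : ℝ) := by
      rw [div_le_iff₀ hδ] at h1; linarith [h1]
    have : (L:ℝ) = (⌈D/δ⌉₊ : ℝ) + 1 := by rw [hLdef]; push_cast; ring
    nlinarith
  -- the maps
  set l0 : Λ := Classical.arbitrary Λ with hl0def
  set g : X → X := f l0 with hgdef
  set s : X → X := Function.surjInv (hs l0) with hsdef
  have hgs : ∀ y, g (s y) = y := fun y => Function.surjInv_eq (hs l0) y
  set w : ℕ → X := fun m => s^[m] x with hwdef
  have hw0 : w 0 = x := rfl
  have hgw : ∀ m, g (w (m+1)) = w m := by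
    intro m
    have : w (m+1) = s (w m) := Function.iterate_succ_apply' s m x
    rw [this, hgs]
  have hgiter : ∀ m, g^[m] (w m) = x := by
    intro m
    induction m with
    | zero => rfl
    | succ m ih =>
      have h1 : w (m+1) = s (w m) := Function.iterate_succ_apply' s m x
      rw [Function.iterate_succ_apply, h1, hgs]
      exact ih
  -- the pseudo-orbit
  set xs : ℕ → X := fun i => if i % P < L then g^[i % P] x else w (P - i % P) with hxsdef
  -- error bound for the pseudo-orbit
  have hmodsucc : ∀ i : ℕ, (i+1) % P = (i % P + 1) % P := by
    intro i
    conv_lhs => rw [Nat.add_mod, Nat.mod_eq_of_lt (by omega : 1 < P)]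
  have he : ∀ i : ℕ, dist (f l0 (xs i)) (xs (i+1)) ≤ if i % P = L - 1 then D else 0 := by
    intro i
    by_cases hLm : i % P = L - 1
    · rw [if_pos hLm]; exact hDd _ _
    · rw [if_neg hLm]
      have hrP : i % P < P := Nat.mod_lt _ hP0
      by_cases hrtop : i % P + 1 = P
      · -- last position of backward block
        have h1 : (i+1) % P = 0 := by rw [hmodsucc, hrtop, Nat.mod_self]
        have hxi : xs i = w 1 := by
          rw [hxsdef]
          simp only
          rw [if_neg (by omega : ¬ i % P < L)]
          congr 1
          omega
        have hxi1 : xs (i+1) = x := by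
          rw [hxsdef]; simp only [h1]
          rw [if_pos (by omega : 0 < L)]
          rfl
        rw [hxi, hxi1]
        have : f l0 (w 1) = x := by rw [← hgdef, hgw 0, hw0]
        simp [this]
      · have h1 : (i+1) % P = i % P + 1 := by
          rw [hmodsucc, Nat.mod_eq_of_lt (by omega : i % P + 1 < P)]
        by_cases hrL : i % P < L
        · -- inside forward block, not at its end
          have h2 : i % P + 1 < L := by omega
          have hxi : xs i = g^[i % P] x := by rw [hxsdef]; simp only [if_pos hrL]
          have hxi1 : xs (i+1) = g^[i % P + 1] x := by
            rw [hxsdef]; simp only [h1]; rw [if_pos h2]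
          rw [hxi, hxi1, Function.iterate_succ_apply', ← hgdef]
          simp
        · -- inside backward block, not at its end
          have hxi : xs i = w (P - i % P) := by rw [hxsdef]; simp only [if_neg hrL]
          have hxi1 : xs (i+1) = w (P - i % P - 1) := by
            rw [hxsdef]; simp only [h1]
            rw [if_neg (by omega : ¬ i % P + 1 < L)]
            congr 1
          have h3 : P - i % P = (P - i % P - 1) + 1 := by omega
          rw [hxi, hxi1, h3, ← hgdef, hgw]
          simp
  -- the pseudo-orbit is a δ-average pseudo-orbit
  set N : ℕ := ⌈2*D/δ⌉₊ + 1 with hNdef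
  have hDN : 2*D < δ * N := by
    have h1 : 2*D / δ ≤ (⌈2*D/δ⌉₊ : ℝ) := Nat.le_ceil _
    have h2 : 2*D ≤ δ * (⌈2*D/δ⌉₊ : ℝ) := by rw [div_le_iff₀ hδ] at h1; linarith
    have : (N:ℝ) = (⌈2*D/δ⌉₊ : ℝ) + 1 := by rw [hNdef]; push_cast; ring
    nlinarith
  have hpo : IsAvgPseudoOrbit f δ xs := by
    refine ⟨N, fun _ => l0, ?_⟩
    intro n hn
    have hn1 : 1 ≤ n := by omega
    have hn0 : (0:ℝ) < n := by exact_mod_cast hn1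
    have hP0' : (0:ℝ) < P := by exact_mod_cast hP0
    -- counting
    have hcard : ((range n).filter (fun i => i % P = L - 1)).card ≤ n / P + 1 := by
      have hinj : ∀ a ∈ (range n).filter (fun i => i % P = L - 1),
          a / P ∈ range (n / P + 1) := by
        intro a ha
        rw [mem_filter, mem_range] at ha
        rw [mem_range]
        exact Nat.lt_succ_of_le (Nat.div_le_div_right ha.1.le)
      have := Finset.card_le_card_of_injOn (fun a => a / P) hinj ?_
      · simpa using this
      · intro a ha b hb hab
        rw [mem_coe, mem_filter, mem_range] at ha hb
        have ha2 : a % P = L - 1 := ha.2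
        have hb2 : b % P = L - 1 := hb.2
        have hab' : a / P = b / P := hab
        have h1 := Nat.div_add_mod a P
        have h2 := Nat.div_add_mod b P
        rw [hab'] at h1
        omega
    have hsum : ∑ i ∈ range n, dist (f l0 (xs i)) (xs (i+1)) ≤ D * ((n / P : ℕ) + 1) := by
      calc ∑ i ∈ range n, dist (f l0 (xs i)) (xs (i+1))
          ≤ ∑ i ∈ range n, (if i % P = L - 1 then D else 0) := Finset.sum_le_sum (fun i _ => he i)
        _ = ∑ i ∈ (range n).filter (fun i => i % P = L - 1), D := (Finset.sum_filter _ _).symm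
        _ = ((range n).filter (fun i => i % P = L - 1)).card * D := by
            rw [Finset.sum_const, nsmul_eq_mul]
        _ ≤ ((n / P : ℕ) + 1) * D := by
            apply mul_le_mul_of_nonneg_right _ hD0
            exact_mod_cast hcard
        _ = D * ((n / P : ℕ) + 1) := by ring
    have hcast : ((n / P : ℕ) : ℝ) ≤ (n:ℝ) / (P:ℝ) := Nat.cast_div_le
    have hkey : (1/(n:ℝ)) * ∑ i ∈ range n, dist (f l0 (xs i)) (xs (i+1))
        ≤ D / P + D / n := by
      have h1 : ∑ i ∈ range n, dist (f l0 (xs i)) (xs (i+1)) ≤ D * ((n:ℝ)/(P:ℝ) + 1) := by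
        refine hsum.trans ?_
        apply mul_le_mul_of_nonneg_left _ hD0
        linarith
      calc (1/(n:ℝ)) * ∑ i ∈ range n, dist (f l0 (xs i)) (xs (i+1))
          ≤ (1/(n:ℝ)) * (D * ((n:ℝ)/(P:ℝ) + 1)) := by
            apply mul_le_mul_of_nonneg_left h1 (by positivity)
        _ = D / P + D / n := by field_simp
    have hLpos : (0:ℝ) < L := by exact_mod_cast hL1
    have hPL : (P:ℝ) = 2 * L := by rw [hPdef]; push_cast; ring
    have c1 : D / (P:ℝ) < δ/2 := by
      rw [div_lt_iff₀ hP0', hPL]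
      nlinarith
    have c2 : D / (n:ℝ) < δ/2 := by
      rw [div_lt_iff₀ hn0]
      have hNn : (N:ℝ) ≤ n := by exact_mod_cast hn
      nlinarith
    calc (1/(n:ℝ)) * ∑ i ∈ range n, dist (f l0 (xs i)) (xs (i+1)) ≤ D / P + D / n := hkey
      _ < δ := by linarith
  -- apply average shadowing
  obtain ⟨z, τ, hτ⟩ := hshad xs hpo
  set dz : ℕ → ℝ := fun i => dist (IFSIter f τ i z) (xs i) with hdzdef
  set a : ℕ → ℝ := fun n => (1/(n:ℝ)) * ∑ i ∈ range n, dz i with hadef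
  have hτ' : limsup a atTop < ρ/8 := hτ
  have habd : ∀ n, a n ≤ D := by
    intro n
    rcases Nat.eq_zero_or_pos n with h0 | h0
    · subst h0; simp [hadef, hD0]
    · have hn0 : (0:ℝ) < n := by exact_mod_cast h0
      have : ∑ i ∈ range n, dz i ≤ n * D := by
        calc ∑ i ∈ range n, dz i ≤ ∑ _i ∈ range n, D := Finset.sum_le_sum (fun i _ => hDd _ _)
          _ = n * D := by rw [Finset.sum_const, card_range, nsmul_eq_mul]
      rw [hadef]
      simp only
      rw [div_mul_eq_mul_div, one_mul, div_le_iff₀ hn0]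
      linarith
  have hev : ∀ᶠ n in atTop, a n < ρ/8 :=
    eventually_lt_of_limsup_lt hτ' (Filter.isBoundedUnder_of ⟨D, fun n => habd n⟩)
  obtain ⟨N₁, hN₁⟩ := eventually_atTop.mp hev
  -- key density lemma: good times in any residue class set of size ≥ L
  have key : ∀ (Q : Finset ℕ), Q ⊆ range P → L ≤ Q.card →
      ∀ M : ℕ, ∃ i, M ≤ i ∧ i % P ∈ Q ∧ dz i < ρ := by
    intro Q hQsub hQcard M
    by_contra hcon
    push_neg at hcon
    -- every Q-time past M is bad
    have hblock : ∀ k, M ≤ k → (ρ * L : ℝ) ≤ ∑ r ∈ range P, dz (k*P + r) := by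
      intro k hk
      have h1 : (ρ * L : ℝ) ≤ ∑ r ∈ Q, ρ := by
        rw [Finset.sum_const, nsmul_eq_mul]
        have : (L:ℝ) ≤ Q.card := by exact_mod_cast hQcard
        nlinarith
      have h2 : ∑ r ∈ Q, ρ ≤ ∑ r ∈ Q, dz (k*P + r) := by
        apply Finset.sum_le_sum
        intro r hr
        have hrP : r < P := mem_range.mp (hQsub hr)
        have hm : (k*P + r) % P = r := by
          rw [Nat.add_comm, Nat.add_mul_mod_self_right, Nat.mod_eq_of_lt hrP]
        have hMi : M ≤ k*P + r := by
          have : k ≤ k * P := Nat.le_mul_of_pos_right k hP0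
          omega
        exact hcon (k*P + r) hMi (by rw [hm]; exact hr)
      have h3 : ∑ r ∈ Q, dz (k*P + r) ≤ ∑ r ∈ range P, dz (k*P + r) :=
        Finset.sum_le_sum_of_subset_of_nonneg hQsub (fun _ _ _ => dist_nonneg)
      linarith
    have hsumlb : ∀ k, M ≤ k → (ρ * L * ((k:ℝ) - M) : ℝ) ≤ ∑ i ∈ range (k*P), dz i := by
      intro k hk
      induction k, hk using Nat.le_induction with
      | base =>
        simp only [sub_self, mul_zero]
        exact Finset.sum_nonneg (fun _ _ => dist_nonneg)
      | succ k hk ih =>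
        have hdecomp : ∑ i ∈ range ((k+1)*P), dz i
            = ∑ i ∈ range (k*P), dz i + ∑ r ∈ range P, dz (k*P + r) := by
          rw [show (k+1)*P = k*P + P by ring, Finset.sum_range_add]
        rw [hdecomp]
        have hb := hblock k hk
        rw [show ((k+1:ℕ):ℝ) = (k:ℝ) + 1 from by norm_cast]
        have expand : ρ * (L:ℝ) * ((k:ℝ) + 1 - M) = ρ * L * ((k:ℝ) - M) + ρ * L := by ring
        rw [expand]
        linarith
    -- choose a large multiple of P
    set k : ℕ := max (2*M + 1) N₁ + 1 with hkdef
    have hkM : M ≤ k := by omega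
    have hkN₁ : N₁ ≤ k * P := by
      have : k ≤ k * P := Nat.le_mul_of_pos_right k hP0
      omega
    have hlt := hN₁ (k*P) hkN₁
    have hlb := hsumlb k hkM
    have hk0 : (0:ℝ) < (k*P : ℕ) := by
      have : 0 < k * P := by positivity
      exact_mod_cast this
    have haval : a (k*P) = (1/((k*P:ℕ):ℝ)) * ∑ i ∈ range (k*P), dz i := rfl
    have hSlt : ∑ i ∈ range (k*P), dz i < ρ/8 * ((k*P:ℕ):ℝ) := by
      rw [haval] at hlt
      rw [div_mul_eq_mul_div, one_mul, div_lt_iff₀ hk0] at hlt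
      linarith
    have hcastP : ((k*P:ℕ):ℝ) = (k:ℝ) * (2 * (L:ℝ)) := by
      push_cast [hPdef]; ring
    have hLpos : (0:ℝ) < L := by exact_mod_cast hL1
    have hkk : (2*M + 1 : ℝ) ≤ (k:ℝ) := by
      have : 2*M + 1 ≤ k := by omega
      exact_mod_cast this
    have hMk : (M:ℝ) ≥ 0 := by positivity
    have hx1 : ρ * (L:ℝ) * ((k:ℝ) - M) < ρ * (L:ℝ) * ((k:ℝ)/4) := by
      have heq : (ρ/8) * ((k*P:ℕ):ℝ) = ρ * (L:ℝ) * ((k:ℝ)/4) := by rw [hcastP]; ring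
      linarith
    have hx2 : ((k:ℝ) - M) < (k:ℝ)/4 := by
      have hpl : (0:ℝ) < ρ * (L:ℝ) := mul_pos hρpos hLpos
      exact (mul_lt_mul_iff_right₀ hpl).mp hx1
    have hk0' : (0:ℝ) ≤ (k:ℝ) := Nat.cast_nonneg k
    linarith
  -- a good forward time
  obtain ⟨i, -, hiQ, hid⟩ := key (range L) (by
      intro r hr; rw [mem_range] at hr ⊢; omega) (by rw [card_range]) 0
  rw [mem_range] at hiQ
  -- a good backward time after i+1
  obtain ⟨j, hjM, hjQ, hjd⟩ := key (Finset.Ico L P) (by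
      intro r hr; rw [Finset.mem_Ico] at hr; rw [mem_range]; omega) (by
      rw [Nat.card_Ico]; omega) (i+2)
  rw [Finset.mem_Ico] at hjQ
  -- assemble the chain
  have hIter : ∀ n : ℕ, IFSIter f τ (n+1) z = f (τ n) (IFSIter f τ n z) := fun _ => rfl
  have horbchain : ∀ (t : ℕ) (c : X) (l : Λ), dist (f l (g^[t] x)) c ≤ ε → IsEpsChain f ε x c := by
    intro t
    induction t with
    | zero => intro c l hd; exact chain_single f l (by simpa using hd)
    | succ t ih =>
      intro c l hd
      have h1 : IsEpsChain f ε x (g^[t+1] x) := by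
        apply ih _ l0
        rw [Function.iterate_succ_apply', ← hgdef]
        simp [hε.le]
      exact chain_extend h1 l hd
  have hxsi : xs i = g^[i % P] x := by rw [hxsdef]; simp only [if_pos hiQ]
  have hC1 : IsEpsChain f ε x (IFSIter f τ (i+1) z) := by
    apply horbchain (i % P) _ (τ i)
    rw [hIter i]
    have hd1 : dist (g^[i % P] x) (IFSIter f τ i z) < Η := by
      rw [← hxsi, dist_comm]
      exact lt_of_lt_of_le hid (min_le_left _ _)
    have := hΗ (τ i) _ _ hd1
    linarith
  have hC2 : ∀ m : ℕ, IsEpsChain f ε x (IFSIter f τ (i+1+m) z) := by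
    intro m
    induction m with
    | zero => exact hC1
    | succ m ih =>
      have : i+1+(m+1) = (i+1+m)+1 := by ring
      rw [this, hIter]
      exact chain_extend ih (τ (i+1+m)) (by simp [hε.le])
  have hC3 : IsEpsChain f ε x (IFSIter f τ (j-1) z) := by
    have := hC2 (j-1-(i+1))
    rwa [show i+1+(j-1-(i+1)) = j-1 by omega] at this
  have hC4 : IsEpsChain f ε x (xs j) := by
    apply chain_extend hC3 (τ (j-1))
    have : f (τ (j-1)) (IFSIter f τ (j-1) z) = IFSIter f τ j z := by
      rw [← hIter (j-1), show j-1+1 = j by omega]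
    rw [this]
    have : dist (IFSIter f τ j z) (xs j) < ρ := hjd
    have hρε : ρ ≤ ε/2 := min_le_right _ _
    linarith
  have hC5 : ∀ t : ℕ, IsEpsChain f ε x (g^[t] (xs j)) := by
    intro t
    induction t with
    | zero => simpa using hC4
    | succ t ih =>
      apply chain_extend ih l0
      rw [Function.iterate_succ_apply', ← hgdef]
      simp [hε.le]
  have hxsj : xs j = w (P - j % P) := by
    rw [hxsdef]; simp only [if_neg (by omega : ¬ j % P < L)]
  have hfinal : g^[P - j % P] (xs j) = x := by rw [hxsj]; exact hgiter _
  have := hC5 (P - j % P)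
  rwa [hfinal] at this
end

section
/- Let 𝓕 = {X; f_λ | λ ∈ Λ} be a parameterized IFS on a compact metric space (X,d) in which every map f_λ is continuous and surjective. If 𝓕 has the average shadowing property, then 𝓕 is chain transitive on the whole space: for every pair of points x, y ∈ X and every ε > 0 there exists an ε-chain from x to y (so 𝓕 has only one chain component, which is all of X). -/
/-!
Fix one map `g = f λ` and a right inverse `h` of it (by surjectivity). The sequence that runs
through `L` points of the `g`-orbit of `x`, then `L` points of the `h`-orbit of `y` backwards
(ending at `y`), and repeats, is a pseudo-orbit with one jump of size at most `diam X` every `L`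
steps, so for large `L` its average error is below the `δ` of the average shadowing property.
A shadowing orbit `z` is `η`-close to it outside a set of density `< 1/4`, hence at some time `i`
in a forward block and some later time `j` in a backward block. The `ε`-chain follows the orbit
of `x` up to time `i`, hops onto the orbit of `z` (`η` is a uniform modulus of continuity of the
maps for `ε`), follows it to time `j - 1`, hops back at time `j` and follows the backward orbit
to `y`.
-/

open Filter Finset

open Relation Function Metric

section Chains

variable {X Λ : Type*} [MetricSpace X] {f : Λ → X → X} {ε : ℝ}

variable (f ε) in
def ChainStep (a b : X) : Prop := ∃ l, dist (f l a) b ≤ ε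

theorem isEpsChain_of_transGen {x y : X} (h : TransGen (ChainStep f ε) x y) :
    IsEpsChain f ε x y := by
  induction h with
  | @single b hxb =>
    obtain ⟨l, hl⟩ := hxb
    exact ⟨1, one_pos, fun i => if i = 0 then x else b, fun _ => l, rfl, rfl,
      fun i hi => by simpa [Nat.lt_one_iff.1 hi] using hl⟩
  | @tail b c _ hbc ih =>
    obtain ⟨n, hn, p, lam, hp0, hpn, hp⟩ := ih
    obtain ⟨l, hl⟩ := hbc
    refine ⟨n + 1, n.succ_pos, fun i => if i ≤ n then p i else c,
      fun i => if i < n then lam i else l, by simp [hp0], by simp, fun i hi => ?_⟩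
    rcases Nat.lt_succ_iff_lt_or_eq.1 hi with hi | rfl
    · simpa [hi.le, Nat.succ_le_of_lt hi, hi] using hp i hi
    · simpa [hpn] using hl

theorem chainStep_apply (hε : 0 ≤ ε) (l : Λ) (a : X) : ChainStep f ε a (f l a) :=
  ⟨l, by rwa [dist_self]⟩

theorem reflTransGen_chainStep_iterate (hε : 0 ≤ ε) (l : Λ) (a : X) (n : ℕ) :
    ReflTransGen (ChainStep f ε) a ((f l)^[n] a) := by
  induction n with
  | zero => exact .refl
  | succ n ih => exact ih.tail (by rw [iterate_succ_apply']; exact chainStep_apply hε l _)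

theorem reflTransGen_chainStep_IFSIter (hε : 0 ≤ ε) (σ : ℕ → Λ) (z : X) {j k : ℕ} (hjk : j ≤ k) :
    ReflTransGen (ChainStep f ε) (IFSIter f σ j z) (IFSIter f σ k z) := by
  induction k, hjk using Nat.le_induction with
  | base => exact .refl
  | succ k _ ih => exact ih.tail (chainStep_apply hε (σ k) _)

theorem transGen_chainStep_of_shadow {η : ℝ}
    (hη : ∀ a b, dist a b < η → ∀ l, dist (f l a) (f l b) < ε) {σ : ℕ → Λ} {z a b : X} {i j : ℕ}
    (hij : i < j) (ha : dist a (IFSIter f σ i z) < η) (hb : dist (IFSIter f σ (j + 1) z) b ≤ ε) :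
    TransGen (ChainStep f ε) a b :=
  .head' ⟨σ i, (hη _ _ ha (σ i)).le⟩ <|
    (reflTransGen_chainStep_IFSIter (dist_nonneg.trans hb) σ z hij).tail ⟨σ j, hb⟩

end Chains

theorem exists_pos_forall_dist_lt_of_uniformContinuous {X Λ : Type*} [MetricSpace X] [Finite Λ]
    {f : Λ → X → X} (hf : ∀ l, UniformContinuous (f l)) {ε : ℝ} (hε : 0 < ε) :
    ∃ η > 0, η ≤ ε ∧ ∀ a b, dist a b < η → ∀ l, dist (f l a) (f l b) < ε := by
  obtain ⟨η, hη, hfη⟩ := mem_uniformity_dist.1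
    (Filter.eventually_all.2 fun l => hf l (dist_mem_uniformity hε))
  exact ⟨min η ε, lt_min hη hε, min_le_right _ _,
    fun a b hab => hfη (hab.trans_le (min_le_left _ _))⟩

section BlockLoop

variable {X : Type*} {g h : X → X} {L i : ℕ}

/-- Blocks of length `L` alternate between the first `L` points of the `g`-orbit of `x` and the
first `L` points of the `h`-orbit of `y` in reverse order. -/
def blockLoop (g h : X → X) (L : ℕ) (x y : X) (i : ℕ) : X :=
  if Even (i / L) then g^[i % L] x else h^[L - 1 - i % L] y

theorem blockLoop_succ (hgh : RightInverse h g) (x y : X) (hi : ¬L ∣ i + 1) :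
    blockLoop g h L x y (i + 1) = g (blockLoop g h L x y i) := by
  rcases L.eq_zero_or_pos with rfl | hL
  · simp [blockLoop, iterate_succ_apply']
  have hdiv : (i + 1) / L = i / L := Nat.succ_div_of_not_dvd hi
  have hmod : (i + 1) % L = i % L + 1 := by
    have := Nat.div_add_mod (i + 1) L
    have := Nat.div_add_mod i L
    rw [hdiv] at *
    omega
  have hlt : i % L + 1 < L := hmod ▸ Nat.mod_lt _ hL
  unfold blockLoop
  rw [hdiv, hmod]
  split_ifs
  · exact iterate_succ_apply' g _ x
  · rw [show L - 1 - i % L = L - 1 - (i % L + 1) + 1 by omega, iterate_succ_apply', hgh]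

end BlockLoop

section BlockLoopChains

variable {X Λ : Type*} [MetricSpace X] {f : Λ → X → X} {ε : ℝ} {l : Λ} {h : X → X} {L i : ℕ}

theorem reflTransGen_chainStep_blockLoop_of_even (hε : 0 ≤ ε) (x y : X) (hi : Even (i / L)) :
    ReflTransGen (ChainStep f ε) x (blockLoop (f l) h L x y i) := by
  rw [blockLoop, if_pos hi]
  exact reflTransGen_chainStep_iterate hε l x _

theorem reflTransGen_chainStep_blockLoop_of_not_even (hε : 0 ≤ ε) (hh : RightInverse h (f l))
    (x y : X) (hi : ¬Even (i / L)) :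
    ReflTransGen (ChainStep f ε) (blockLoop (f l) h L x y i) y := by
  rw [blockLoop, if_neg hi]
  have := reflTransGen_chainStep_iterate (f := f) hε l (h^[L - 1 - i % L] y) (L - 1 - i % L)
  rwa [hh.iterate _ y] at this

end BlockLoopChains

theorem avg_le_div_of_eq_zero_of_not_dvd {e : ℕ → ℝ} {D : ℝ} {L : ℕ} (hD : 0 ≤ D)
    (he : ∀ i, e i ≤ D) (he0 : ∀ i, ¬L ∣ i + 1 → e i = 0) (n : ℕ) :
    (1 / n : ℝ) * ∑ i ∈ range n, e i ≤ D / L := by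
  have hsum : ∑ i ∈ range n, e i ≤ (n / L : ℝ) * D :=
    calc ∑ i ∈ range n, e i = ∑ i ∈ range n with L ∣ i + 1, e i :=
          (sum_filter_of_ne fun i _ hne => not_not.1 (mt (he0 i) hne)).symm
      _ ≤ #{i ∈ range n | L ∣ i + 1} • D := sum_le_card_nsmul _ _ _ fun i _ => he i
      _ = (n / L : ℕ) * D := by rw [Nat.card_multiples, nsmul_eq_mul]
      _ ≤ (n / L : ℝ) * D := by gcongr; exact Nat.cast_div_le
  rcases n.eq_zero_or_pos with rfl | hn
  · simpa using div_nonneg hD L.cast_nonneg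
  calc (1 / n : ℝ) * ∑ i ∈ range n, e i ≤ (1 / n : ℝ) * ((n / L : ℝ) * D) := by gcongr
    _ = D / L := by field_simp

theorem isAvgPseudoOrbit_blockLoop {X Λ : Type*} [MetricSpace X] [CompactSpace X]
    {f : Λ → X → X} {l : Λ} {h : X → X} (hh : RightInverse h (f l)) {δ : ℝ} {L : ℕ}
    (hL : diam (Set.univ : Set X) < L * δ) (x y : X) :
    IsAvgPseudoOrbit f δ (blockLoop (f l) h L x y) := by
  have hLδ : 0 < L * δ := diam_nonneg.trans_lt hL
  have hL0 : (0 : ℝ) < L := L.cast_nonneg.lt_of_ne (by rintro hL; simp [← hL] at hLδ)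
  refine ⟨0, fun _ => l, fun n _ => ?_⟩
  refine (avg_le_div_of_eq_zero_of_not_dvd diam_nonneg
    (fun i => dist_le_diam_of_mem isCompact_univ.isBounded trivial trivial)
    (fun i hi => by rw [blockLoop_succ hh x y hi, dist_self]) n).trans_lt ?_
  rwa [div_lt_iff₀ hL0, mul_comm]

theorem eventually_sum_range_lt_of_limsup_lt {a : ℕ → ℝ} {D c : ℝ} (ha : ∀ i, a i ≤ D)
    (h : limsup (fun n : ℕ => (1 / n : ℝ) * ∑ i ∈ range n, a i) atTop < c) :
    ∀ᶠ n : ℕ in atTop, ∑ i ∈ range n, a i < n * c := by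
  have hbdd : ∀ᶠ n : ℕ in atTop, (1 / n : ℝ) * ∑ i ∈ range n, a i ≤ D := by
    filter_upwards [eventually_gt_atTop 0] with n hn
    have : ∑ i ∈ range n, a i ≤ n * D := by
      simpa using sum_le_card_nsmul (range n) a D fun i _ => ha i
    rw [one_div_mul_eq_div, div_le_iff₀ (by exact_mod_cast hn)]
    linarith
  filter_upwards [eventually_lt_of_limsup_lt h (isBoundedUnder_of_eventually_le hbdd),
    eventually_gt_atTop 0] with n hn hn0
  rwa [one_div_mul_eq_div, div_lt_iff₀' (by exact_mod_cast hn0)] at hn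

theorem exists_lt_of_sum_lt_card_mul {ι κ : Type*} {s : Finset ι} {t : Finset κ} {φ : ι → κ}
    {d : κ → ℝ} {η : ℝ} (hφ : Set.InjOn φ s) (hst : Set.MapsTo φ s t) (hd : ∀ k ∈ t, 0 ≤ d k)
    (h : ∑ k ∈ t, d k < #s * η) : ∃ i ∈ s, d (φ i) < η := by
  classical
  by_contra! hge
  have : #s * η ≤ ∑ k ∈ t, d k :=
    calc #s * η ≤ ∑ i ∈ s, d (φ i) := by
          rw [← nsmul_eq_mul]; exact card_nsmul_le_sum _ _ _ hge
      _ = ∑ k ∈ s.image φ, d k := (sum_image hφ).symm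
      _ ≤ ∑ k ∈ t, d k :=
          sum_le_sum_of_subset_of_nonneg (image_subset_iff.2 hst) fun k hk _ => hd k hk
  linarith

theorem exists_even_odd_block_lt_of_sum_lt {d : ℕ → ℝ} {η : ℝ} {L t : ℕ} (hL : 0 < L)
    (hd : ∀ i, 0 ≤ d i) (hsum : ∑ i ∈ range (4 * t * L), d i < t * L * η) :
    ∃ i j, i + 1 < j ∧ Even (i / L) ∧ ¬Even (j / L) ∧ d i < η ∧ d j < η := by
  -- `φ` enumerates the indices in even blocks of length `L`, and `φ · + L` those in odd blocks.
  set φ : ℕ → ℕ := fun j => j + L * (j / L)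
  have hφ : StrictMono φ :=
    strictMono_id.add_monotone fun a b hab => Nat.mul_le_mul_left L (Nat.div_le_div_right hab)
  have hφtL : φ (t * L) = 2 * t * L := by simp only [φ, Nat.mul_div_cancel _ hL]; ring
  have hφdiv (j : ℕ) : φ j / L = j / L + j / L := Nat.add_mul_div_left _ _ hL
  have hsum' (s : Finset ℕ) (hs : #s = t * L) : ∑ i ∈ range (4 * t * L), d i < #s * η := by
    rwa [hs, Nat.cast_mul]
  obtain ⟨j₁, hj₁, hi⟩ := exists_lt_of_sum_lt_card_mul (s := range (t * L)) hφ.injective.injOn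
    (fun j hj => by
      have := hφ (mem_range.1 hj)
      simp only [coe_range, Set.mem_Iio] at *
      nlinarith)
    (fun i _ => hd i) (hsum' _ (card_range _))
  obtain ⟨j₂, hj₂, hj⟩ := exists_lt_of_sum_lt_card_mul (s := Ico (t * L) (2 * t * L))
    (φ := fun j => φ j + L) (add_left_injective L |>.comp hφ.injective).injOn
    (fun j hj => by
      simp only [coe_Ico, coe_range, Set.mem_Ico, Set.mem_Iio] at *
      have : j / L + 1 ≤ 2 * t := (Nat.div_lt_iff_lt_mul hL).2 (by linarith)
      show j + L * (j / L) + L < 4 * t * L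
      nlinarith [Nat.mul_le_mul_left L this])
    (fun i _ => hd i) (hsum' _ (by rw [Nat.card_Ico]; ring_nf; omega))
  refine ⟨φ j₁, φ j₂ + L, ?_, by simp [hφdiv], ?_, hi, hj⟩
  · have h₁ := hφ (mem_range.1 hj₁)
    have h₂ := hφ.monotone (mem_Ico.1 hj₂).1
    omega
  · rw [Nat.add_div_right _ hL, hφdiv]
    simp

/-- a continuous surjective IFS on a compact metric space with the
average shadowing property is chain transitive: any point can be joined to any other
by an ε-chain, for every ε > 0. -/
theorem avgShadowing_chainTransitive
    {X : Type*} [MetricSpace X] [CompactSpace X]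
    {Λ : Type*} [Finite Λ] [Nonempty Λ]
    (f : Λ → X → X) (hc : ∀ l : Λ, Continuous (f l))
    (hs : ∀ l : Λ, Function.Surjective (f l))
    (h : HasAvgShadowing f) :
    ∀ x y : X, ∀ ε : ℝ, 0 < ε → IsEpsChain f ε x y := by
  intro x y ε hε
  obtain ⟨η, hη, hηε, hfη⟩ := exists_pos_forall_dist_lt_of_uniformContinuous
    (fun l => CompactSpace.uniformContinuous_of_continuous (hc l)) hε
  obtain ⟨δ, hδ, hshadow⟩ := h (η / 4) (by positivity)
  obtain ⟨L, hL⟩ := exists_nat_gt (diam (Set.univ : Set X) / δ)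
  have hL0 : 0 < L := Nat.cast_pos.1 ((div_nonneg diam_nonneg hδ.le).trans_lt hL)
  obtain ⟨l⟩ := ‹Nonempty Λ›
  have hh := rightInverse_surjInv (hs l)
  set p := blockLoop (f l) (surjInv (hs l)) L x y
  obtain ⟨z, σ, hz⟩ := hshadow p (isAvgPseudoOrbit_blockLoop hh ((div_lt_iff₀ hδ).1 hL) x y)
  obtain ⟨N, hN⟩ := (eventually_sum_range_lt_of_limsup_lt
    (fun _ => dist_le_diam_of_mem isCompact_univ.isBounded trivial trivial) hz)
    |>.exists_forall_of_atTop
  obtain ⟨i, j, hij, hi, hj, hzi, hzj⟩ := exists_even_odd_block_lt_of_sum_lt (t := N + 1) (η := η)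
    (d := fun i => dist (IFSIter f σ i z) (p i)) hL0 (fun _ => dist_nonneg)
    ((hN (4 * (N + 1) * L) (by nlinarith)).trans_eq (by push_cast; ring))
  obtain ⟨k, rfl⟩ : ∃ k, j = k + 1 := ⟨j - 1, by omega⟩
  have hhop : TransGen (ChainStep f ε) (p i) (p (k + 1)) :=
    transGen_chainStep_of_shadow hfη (by omega) (dist_comm (p i) _ ▸ hzi) (hzj.le.trans hηε)
  exact isEpsChain_of_transGen <|
    .trans_right (reflTransGen_chainStep_blockLoop_of_even hε.le x y hi) <|
      hhop.trans_left (reflTransGen_chainStep_blockLoop_of_not_even hε.le hh x y hj)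
end

section
/- Consider the Sierpinski IFS on ℝ² (with the Euclidean metric) consisting of the three maps f_1(x) = (1/2)x, f_2(x) = (1/2)x + (1/2, 0), and f_3(x) = (1/2)x + (1/4, √3/4). The IFS 𝓕 = {ℝ²; f_1, f_2, f_3} is uniformly contracting (with contracting ratio 1/2) and has the average shadowing property. -/
open Filter Finset

/-- The three maps of the Sierpinski IFS on the Euclidean plane. -/
noncomputable def sierpinskiIFS : Fin 3 → EuclideanSpace ℝ (Fin 2) → EuclideanSpace ℝ (Fin 2) :=
  ![fun x => (1 / 2 : ℝ) • x,
    fun x => (1 / 2 : ℝ) • x + (WithLp.equiv 2 (Fin 2 → ℝ)).symm ![1 / 2, 0],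
    fun x => (1 / 2 : ℝ) • x + (WithLp.equiv 2 (Fin 2 → ℝ)).symm ![1 / 4, Real.sqrt 3 / 4]]

theorem contracting_hasAvgShadowing {X : Type*} [MetricSpace X] {Λ : Type*}
    (f : Λ → X → X)
    (hc : ∀ (i : Λ) (x y : X), dist (f i x) (f i y) ≤ (1 / 2) * dist x y) :
    HasAvgShadowing f := by
  intro ε hε
  refine ⟨ε / 4, by positivity, ?_⟩
  rintro x ⟨N, σ, hσ⟩
  refine ⟨x 0, σ, ?_⟩
  set d : ℕ → ℝ := fun i => dist (IFSIter f σ i (x 0)) (x i) with hd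
  set e : ℕ → ℝ := fun i => dist (f (σ i) (x i)) (x (i + 1)) with he
  have hd0 : d 0 = 0 := by simp [hd, IFSIter]
  have hstep : ∀ i, d (i + 1) ≤ (1/2) * d i + e i := by
    intro i
    calc d (i + 1) ≤ dist (f (σ i) (IFSIter f σ i (x 0))) (f (σ i) (x i)) + e i :=
          dist_triangle _ _ _
      _ ≤ (1/2) * d i + e i := by
          have := hc (σ i) (IFSIter f σ i (x 0)) (x i)
          simpa [IFSIter] using add_le_add_right this (e i)
  have hS : ∀ n, ∑ i ∈ Finset.range n, d i ≤ 2 * ∑ i ∈ Finset.range n, e i := by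
    intro n
    match n with
    | 0 => simp
    | m + 1 =>
      have h1 : ∑ i ∈ Finset.range (m + 1), d i
          ≤ (1/2) * ∑ i ∈ Finset.range m, d i + ∑ i ∈ Finset.range m, e i := by
        rw [Finset.sum_range_succ']
        have : ∑ i ∈ Finset.range m, d (i + 1)
            ≤ ∑ i ∈ Finset.range m, ((1/2) * d i + e i) :=
          Finset.sum_le_sum fun i _ => hstep i
        rw [hd0]
        simpa [Finset.sum_add_distrib, Finset.mul_sum] using this
      have h2 : ∑ i ∈ Finset.range m, d i ≤ ∑ i ∈ Finset.range (m + 1), d i := by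
        rw [Finset.sum_range_succ]
        have : 0 ≤ d m := dist_nonneg
        linarith
      have h3 : 0 ≤ e m := dist_nonneg
      rw [Finset.sum_range_succ (f := e)]
      linarith
  have hbound : ∀ᶠ n : ℕ in atTop,
      (1 / n : ℝ) * ∑ i ∈ Finset.range n, d i ≤ ε / 2 := by
    filter_upwards [eventually_ge_atTop N] with n hn
    have hinv : (0:ℝ) ≤ 1 / n := by positivity
    calc (1 / n : ℝ) * ∑ i ∈ Finset.range n, d i
        ≤ (1 / n : ℝ) * (2 * ∑ i ∈ Finset.range n, e i) :=
          mul_le_mul_of_nonneg_left (hS n) hinv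
      _ = 2 * ((1 / n : ℝ) * ∑ i ∈ Finset.range n, e i) := by ring
      _ ≤ 2 * (ε / 4) := by
          have := hσ n hn
          linarith [this]
      _ = ε / 2 := by ring
  have hcob : IsCoboundedUnder (· ≤ ·) atTop
      (fun n : ℕ => (1 / n : ℝ) * ∑ i ∈ Finset.range n, d i) :=
    isCoboundedUnder_le_of_le atTop (x := 0) fun n =>
      mul_nonneg (by positivity) (Finset.sum_nonneg fun i _ => dist_nonneg)
  calc limsup (fun n : ℕ => (1 / n : ℝ) * ∑ i ∈ Finset.range n, d i) atTop
      ≤ ε / 2 := limsup_le_of_le hcob hbound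
    _ < ε := by linarith

/-- the Sierpinski IFS is uniformly contracting with contracting ratio
`1/2` and has the average shadowing property. -/
theorem sierpinski_avgShadowing :
    (∀ (i : Fin 3) (x y : EuclideanSpace ℝ (Fin 2)),
      dist (sierpinskiIFS i x) (sierpinskiIFS i y) ≤ (1 / 2) * dist x y) ∧
    HasAvgShadowing sierpinskiIFS := by
  have hc : ∀ (i : Fin 3) (x y : EuclideanSpace ℝ (Fin 2)),
      dist (sierpinskiIFS i x) (sierpinskiIFS i y) ≤ (1 / 2) * dist x y := by
    intro i x y
    have key : ∀ c : EuclideanSpace ℝ (Fin 2),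
        dist ((1/2:ℝ) • x + c) ((1/2:ℝ) • y + c) ≤ (1/2) * dist x y := by
      intro c
      rw [dist_add_right, dist_smul₀, Real.norm_eq_abs, abs_of_nonneg (by norm_num : (0:ℝ) ≤ 1/2)]
    fin_cases i
    · simpa [sierpinskiIFS] using key 0
    · exact key _
    · exact key _
  exact ⟨hc, contracting_hasAvgShadowing sierpinskiIFS hc⟩
end

section
/- Let Σ_2 = {0,1}^ℕ with the metric d(s,t) = 0 if s = t and d(s,t) = 1/2^{k−1} otherwise, where k = min{i : s_i ≠ t_i}. Define f_0, f_1 : Σ_2 → Σ_2 by f_0(s_0 s_1 s_2 …) = 0 s_0 s_1 s_2 … and f_1(s_0 s_1 s_2 …) = 1 s_0 s_1 s_2 … (prepending the symbol 0, respectively 1). Then the IFS 𝓕 = {Σ_2; f_0, f_1} is uniformly contracting (with contracting ratio 1/2) and has the average shadowing property. -/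
open Filter Finset

/-- The two prepending maps on the full 2-shift space. -/
def shiftIFS : Fin 2 → (ℕ → Fin 2) → (ℕ → Fin 2) :=
  fun b s n => match n with
    | 0 => b
    | m + 1 => s m

/-!
Prepending a symbol halves the distance, so the IFS is a uniform contraction with ratio `1/2`.
Every uniformly contracting IFS has the average shadowing property, with the first point of the
pseudo-orbit as shadowing point: along the same symbol sequence the errors `uᵢ` of the orbit
satisfy `uᵢ₊₁ ≤ K uᵢ + eᵢ`, where `eᵢ` are the jumps of the pseudo-orbit, so that
`(1 - K) ∑ uᵢ ≤ ∑ eᵢ` and the averages of the `uᵢ` are at most `δ / (1 - K)`.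
-/

open scoped NNReal

theorem sum_range_mul_le_of_le_mul_add {u e : ℕ → ℝ} {K : ℝ} (hu₀ : u 0 = 0)
    (hstep : ∀ i, u (i + 1) ≤ K * u i + e i) (n : ℕ) :
    (1 - K) * ∑ i ∈ range n, u i + u n ≤ ∑ i ∈ range n, e i := by
  induction n with
  | zero => simp [hu₀]
  | succ n ih =>
    rw [sum_range_succ, sum_range_succ]
    linarith [hstep n]

section IFS

variable {X Λ : Type*} [MetricSpace X] {f : Λ → X → X}

theorem dist_IFSIter_succ_le {K : ℝ≥0} (hf : ∀ l, LipschitzWith K (f l)) (σ : ℕ → Λ)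
    (z : X) (x : ℕ → X) (i : ℕ) :
    dist (IFSIter f σ (i + 1) z) (x (i + 1)) ≤
      K * dist (IFSIter f σ i z) (x i) + dist (f (σ i) (x i)) (x (i + 1)) :=
  calc dist (f (σ i) (IFSIter f σ i z)) (x (i + 1))
      ≤ dist (f (σ i) (IFSIter f σ i z)) (f (σ i) (x i)) + dist (f (σ i) (x i)) (x (i + 1)) :=
        dist_triangle _ _ _
    _ ≤ K * dist (IFSIter f σ i z) (x i) + dist (f (σ i) (x i)) (x (i + 1)) := by
        gcongr
        exact (hf (σ i)).dist_le_mul _ _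

theorem hasAvgShadowing_of_lipschitzWith {K : ℝ≥0} (hK : K < 1)
    (hf : ∀ l, LipschitzWith K (f l)) : HasAvgShadowing f := by
  intro ε hε
  have hK' : (0 : ℝ) < 1 - K := sub_pos.2 (by exact_mod_cast hK)
  refine ⟨(1 - K) * (ε / 2), by positivity, ?_⟩
  rintro x ⟨N, σ, hσ⟩
  refine ⟨x 0, σ, ?_⟩
  set u : ℕ → ℝ := fun i => dist (IFSIter f σ i (x 0)) (x i)
  have hsum := sum_range_mul_le_of_le_mul_add (u := u) (by simp [u, IFSIter])
    (dist_IFSIter_succ_le hf σ (x 0) x)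
  have hev : ∀ᶠ n : ℕ in atTop, (1 / n : ℝ) * ∑ i ∈ range n, u i ≤ ε / 2 := by
    filter_upwards [eventually_ge_atTop N] with n hn
    refine (lt_of_mul_lt_mul_left ?_ hK'.le).le
    calc (1 - K) * ((1 / n : ℝ) * ∑ i ∈ range n, u i)
        = (1 / n : ℝ) * ((1 - K) * ∑ i ∈ range n, u i) := by ring
      _ ≤ (1 / n : ℝ) * ∑ i ∈ range n, dist (f (σ i) (x i)) (x (i + 1)) := by
        gcongr
        linarith [hsum n, dist_nonneg (x := IFSIter f σ n (x 0)) (y := x n)]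
      _ < (1 - K) * (ε / 2) := hσ n hn
  calc limsup (fun n : ℕ => (1 / n : ℝ) * ∑ i ∈ range n, u i) atTop
      ≤ ε / 2 := limsup_le_of_le (isCoboundedUnder_le_of_le atTop fun _ => by positivity) hev
    _ < ε := half_lt_self hε

end IFS

theorem dist_shiftIFS [MetricSpace (ℕ → Fin 2)]
    (hd : ∀ (s t : ℕ → Fin 2) (k : ℕ), (∀ i < k, s i = t i) → s k ≠ t k →
      dist s t = (1 / 2 : ℝ) ^ ((k : ℤ) - 1))
    (b : Fin 2) (s t : ℕ → Fin 2) :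
    dist (shiftIFS b s) (shiftIFS b t) = 1 / 2 * dist s t := by
  obtain rfl | hst := eq_or_ne s t
  · simp
  have hex : ∃ i, s i ≠ t i := Function.ne_iff.1 hst
  have hmin : ∀ i < Nat.find hex, s i = t i := fun i hi => not_not.1 (Nat.find_min hex hi)
  have hshift : ∀ i < Nat.find hex + 1, shiftIFS b s i = shiftIFS b t i
    | 0, _ => rfl
    | i + 1, hi => hmin i (by omega)
  rw [hd _ _ _ hshift (Nat.find_spec hex), hd _ _ _ hmin (Nat.find_spec hex), Nat.cast_succ,
    add_sub_right_comm, zpow_add_one₀ (by norm_num)]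
  ring

/-- with the metric `d(s,t) = (1/2)^(k-1)` (where `k` is the first index
where `s` and `t` differ), the IFS of the two prepending maps on `Σ₂ = {0,1}^ℕ` is
uniformly contracting with contracting ratio `1/2` and has the average shadowing
property. -/
theorem shiftIFS_avgShadowing [MetricSpace (ℕ → Fin 2)]
    (hd : ∀ (s t : ℕ → Fin 2) (k : ℕ), (∀ i < k, s i = t i) → s k ≠ t k →
      dist s t = (1 / 2 : ℝ) ^ ((k : ℤ) - 1)) :
    (∀ (b : Fin 2) (s t : ℕ → Fin 2),
      dist (shiftIFS b s) (shiftIFS b t) ≤ (1 / 2) * dist s t) ∧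
    HasAvgShadowing shiftIFS := by
  refine ⟨fun b s t => (dist_shiftIFS hd b s t).le, ?_⟩
  exact hasAvgShadowing_of_lipschitzWith (K := 2⁻¹) (by norm_num) fun b =>
    LipschitzWith.of_dist_le_mul fun s t => by simpa using (dist_shiftIFS hd b s t).le
end

section
/- Fix 0 < a < 1. Define homeomorphisms F_1, F_2 of [0,1] by F_1(t) = t + (a − t)t for 0 ≤ t ≤ a and F_1(t) = t + (1 − t)(t − a) for a ≤ t ≤ 1; F_2(t) = t + (a − t)t² for 0 ≤ t ≤ a and F_2(t) = t + (1 − t²)(t − a) for a ≤ t ≤ 1. Let f_1, f_2 be the induced homeomorphisms of the circle S¹ = ℝ/ℤ, and let 𝓕 = {S¹; f_1, f_2}. Then: (a) 𝓕 does not have the average shadowing property; and (b) every point x ∈ S¹ is chain recurrent for 𝓕. -/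
open Filter Finset

/-- The two interval homeomorphisms of Example 7, pieced together by a case split at `a`. -/
noncomputable def exampleF (a : ℝ) : Fin 2 → ℝ → ℝ :=
  ![fun t => if t ≤ a then t + (a - t) * t else t + (1 - t) * (t - a),
    fun t => if t ≤ a then t + (a - t) * t ^ 2 else t + (1 - t ^ 2) * (t - a)]

/-
Chain recurrence only uses `f₁`. On the circle it fixes `0` and `a` and pushes every other point
monotonically forward: points of `(0, a)` converge to `a`, points of `(a, 1)` to `1 ≡ 0`. Hence
every point ε-chains to `0`, and `0` and `a` ε-chain to each other. Conversely, by the intermediate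
value theorem, a point just above `0` (resp. `a`) is carried by some iterate exactly onto any given
point of `[0, a)` (resp. `[a, 1)`), so `0` ε-chains to every point.

Both maps fix `0` and `a`. The sequence sitting at `0` on `[4ᵏ, 4ᵏ⁺¹)` for even `k` and at `a` for
odd `k` is a δ-average pseudo-orbit for every δ, since it jumps only `O(log n)` times before time
`n`. Each block takes three quarters of the time up to its end, so an orbit shadowing it in average
comes close to `0`, then to `a`, then to `0` again. That is impossible: an orbit near `0` stays in
the arc `[0, a]` or just below `0`; once it then comes near `a` it is trapped in a short arc
`[a - r, a]`, and that arc stays away from `0`.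
-/

open Topology Metric

section Chains

variable {X Λ : Type*} [MetricSpace X] {f : Λ → X → X} {ε : ℝ} {x y z : X}

theorem isEpsChain_single (j : Λ) (h : dist (f j x) y ≤ ε) : IsEpsChain f ε x y := by
  refine ⟨1, one_pos, fun i => if i = 0 then x else y, fun _ => j, rfl, rfl, fun i hi => ?_⟩
  obtain rfl : i = 0 := by omega
  simpa using h

theorem IsEpsChain.trans (hxy : IsEpsChain f ε x y) (hyz : IsEpsChain f ε y z) :
    IsEpsChain f ε x z := by
  obtain ⟨n, hn, p, lam, hp0, hpn, hp⟩ := hxy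
  obtain ⟨m, hm, q, mu, hq0, hqm, hq⟩ := hyz
  refine ⟨n + m, by omega, fun i => if i ≤ n then p i else q (i - n),
    fun i => if i < n then lam i else mu (i - n), by simpa using hp0, ?_, fun i hi => ?_⟩
  · simp [show ¬ n + m ≤ n by omega, hqm]
  rcases lt_trichotomy i n with h | rfl | h
  · simpa [h.le, show i + 1 ≤ n from h, h] using hp i h
  · simpa [hpn, ← hq0] using hq 0 hm
  · simpa [show ¬ i ≤ n by omega, show ¬ i + 1 ≤ n by omega, show ¬ i < n by omega,
      show i + 1 - n = i - n + 1 by omega] using hq (i - n) (by omega)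

theorem isEpsChain_iterate (j : Λ) (hε : 0 ≤ ε) (n : ℕ) : IsEpsChain f ε x ((f j)^[n + 1] x) :=
  ⟨n + 1, n.succ_pos, fun i => (f j)^[i] x, fun _ => j, rfl, rfl, fun i _ => by
    simpa [← Function.iterate_succ_apply' (f j)] using hε⟩

def ChainReaches (f : Λ → X → X) (x y : X) : Prop :=
  ∀ ε : ℝ, 0 < ε → IsEpsChain f ε x y

theorem ChainReaches.trans (hxy : ChainReaches f x y) (hyz : ChainReaches f y z) :
    ChainReaches f x z :=
  fun ε hε => (hxy ε hε).trans (hyz ε hε)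

theorem chainReaches_of_tendsto_iterate (j : Λ)
    (h : Tendsto (fun n => (f j)^[n] x) atTop (𝓝 y)) : ChainReaches f x y := by
  intro ε hε
  obtain ⟨N, hN⟩ := eventually_atTop.1 (h.eventually (closedBall_mem_nhds y hε))
  refine (isEpsChain_iterate j hε.le N).trans (isEpsChain_single j ?_)
  rw [← Function.iterate_succ_apply' (f j)]
  exact hN _ (by omega)

end Chains

section Averages

theorem sum_range_le_mul_natLog {d : ℕ → ℝ} {B : ℝ} (b : ℕ) (hB : 0 ≤ B) (hdB : ∀ i, d i ≤ B)
    (hd : ∀ i, Nat.log b i = Nat.log b (i + 1) → d i = 0) (n : ℕ) :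
    ∑ i ∈ Finset.range n, d i ≤ B * Nat.log b n := by
  induction n with
  | zero => simp
  | succ n ih =>
    rw [Finset.sum_range_succ]
    by_cases h : Nat.log b n = Nat.log b (n + 1)
    · rw [hd n h, ← h]
      linarith
    · have : (Nat.log b n : ℝ) + 1 ≤ Nat.log b (n + 1) := by
        exact_mod_cast (Nat.log_mono_right n.le_succ).lt_of_ne h
      nlinarith [hdB n]

theorem tendsto_natLog_div_atTop (b : ℕ) :
    Tendsto (fun n : ℕ => (Nat.log b n : ℝ) / n) atTop (𝓝 0) := by
  have h := (Real.tendsto_pow_logb_div_mul_add_atTop (b := b) 1 0 1 one_ne_zero).comp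
    tendsto_natCast_atTop_atTop
  refine squeeze_zero (fun n => by positivity) (fun n => ?_) (by simpa using h)
  exact div_le_div_of_nonneg_right (Real.natLog_le_logb n b) n.cast_nonneg

theorem isBoundedUnder_le_average {d : ℕ → ℝ} {B : ℝ} (hB : 0 ≤ B) (hdB : ∀ i, d i ≤ B) :
    IsBoundedUnder (· ≤ ·) atTop fun n : ℕ => (1 / n : ℝ) * ∑ i ∈ Finset.range n, d i := by
  refine ⟨B, eventually_map.2 (Eventually.of_forall fun n => ?_)⟩
  rcases n.eq_zero_or_pos with rfl | hn
  · simpa using hB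
  calc (1 / n : ℝ) * ∑ i ∈ Finset.range n, d i ≤ (1 / n : ℝ) * (n * B) := by
        gcongr
        exact (Finset.sum_le_card_nsmul _ _ _ fun i _ => hdB i).trans (by simp)
    _ = B := by field_simp

theorem exists_lt_of_sum_range_lt {d : ℕ → ℝ} (hd : ∀ i, 0 ≤ d i) {m n : ℕ} {r η : ℝ}
    (hr : η * n ≤ (n - m : ℕ) * r) (h : ∑ i ∈ Finset.range n, d i < η * n) :
    ∃ i ∈ Finset.Ico m n, d i < r := by
  by_contra! hge
  have : ((n - m : ℕ) : ℝ) * r ≤ ∑ i ∈ Finset.range n, d i := calc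
    ((n - m : ℕ) : ℝ) * r = (Finset.Ico m n).card • r := by simp
    _ ≤ ∑ i ∈ Finset.Ico m n, d i := Finset.card_nsmul_le_sum _ _ _ hge
    _ ≤ ∑ i ∈ Finset.range n, d i :=
      Finset.sum_le_sum_of_subset_of_nonneg (fun i hi => by simp at hi ⊢; omega)
        fun i _ _ => hd i
  linarith

/-- The block `[4ᵏ, 4ᵏ⁺¹)` takes three quarters of the time up to its end. -/
theorem exists_mem_Ico_pow_four_lt {d : ℕ → ℝ} (hd : ∀ i, 0 ≤ d i) {r : ℝ} (hr : 0 ≤ r)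
    {N : ℕ} (hN : ∀ n, N ≤ n → (1 / n : ℝ) * ∑ i ∈ Finset.range n, d i < r / 2) {k : ℕ}
    (hk : N ≤ 4 ^ (k + 1)) : ∃ i ∈ Finset.Ico (4 ^ k) (4 ^ (k + 1)), d i < r := by
  have hlen : 4 ^ (k + 1) - 4 ^ k = 3 * 4 ^ k := by rw [pow_succ]; omega
  have hpos : (0 : ℝ) < 4 ^ (k + 1) := by positivity
  refine exists_lt_of_sum_range_lt hd (η := r / 2) ?_ ?_
  · rw [hlen, pow_succ]
    push_cast
    nlinarith [pow_pos (by norm_num : (0 : ℝ) < 4) k]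
  · have := hN _ hk
    push_cast at this ⊢
    rwa [one_div, inv_mul_lt_iff₀ hpos, mul_comm] at this

end Averages

section Shadowing

variable {X Λ : Type*} {f : Λ → X → X}

theorem IFSIter_mem_of_mapsTo {S : Set X} (hS : ∀ j, Set.MapsTo (f j) S S) (σ : ℕ → Λ) {z : X}
    {m n : ℕ} (hm : IFSIter f σ m z ∈ S) (hmn : m ≤ n) : IFSIter f σ n z ∈ S := by
  induction n, hmn using Nat.le_induction with
  | base => exact hm
  | succ n _ ih => exact hS (σ n) ih

def blockSeq (p q : X) (i : ℕ) : X :=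
  if Even (Nat.log 4 i) then p else q

theorem blockSeq_of_mem_Ico {p q : X} {k i : ℕ} (hi : i ∈ Finset.Ico (4 ^ k) (4 ^ (k + 1))) :
    blockSeq p q i = if Even k then p else q := by
  rw [Finset.mem_Ico] at hi
  rw [blockSeq, Nat.log_eq_of_pow_le_of_lt_pow hi.1 hi.2]

theorem isAvgPseudoOrbit_blockSeq [MetricSpace X] {p q : X} (j : Λ) (hp : f j p = p)
    (hq : f j q = q) {δ : ℝ} (hδ : 0 < δ) : IsAvgPseudoOrbit f δ (blockSeq p q) := by
  have hfix : ∀ i, f j (blockSeq p q i) = blockSeq p q i := by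
    intro i; unfold blockSeq; split <;> assumption
  have hsum (n : ℕ) : ∑ i ∈ Finset.range n, dist (f j (blockSeq p q i)) (blockSeq p q (i + 1)) ≤
      dist p q * Nat.log 4 n := by
    refine sum_range_le_mul_natLog 4 dist_nonneg (fun i => ?_) (fun i h => ?_) n
    · rw [hfix]; unfold blockSeq; split_ifs <;> simp [dist_comm]
    · rw [hfix, blockSeq, blockSeq, h, dist_self]
  obtain ⟨N, hN⟩ := eventually_atTop.1 <| ((tendsto_natLog_div_atTop 4).const_mul
    (dist p q)).eventually (gt_mem_nhds (by simpa using hδ))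
  refine ⟨N, fun _ => j, fun n hn => lt_of_le_of_lt ?_ (hN n hn)⟩
  calc (1 / n : ℝ) * ∑ i ∈ Finset.range n, dist (f j (blockSeq p q i)) (blockSeq p q (i + 1))
      ≤ (1 / n : ℝ) * (dist p q * Nat.log 4 n) := by gcongr; exact hsum n
    _ = dist p q * (Nat.log 4 n / n) := by ring

/-- The obstruction is the pseudo-orbit `blockSeq p q`: an orbit shadowing it in average would
pass near `p`, then near `q`, then near `p` again. -/
theorem not_hasAvgShadowing_of_trap [MetricSpace X] [BoundedSpace X] {p q : X} (j : Λ)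
    (hp : f j p = p) (hq : f j q = q) {r : ℝ} (hr : 0 < r) {S D : Set X}
    (hS : ∀ i, Set.MapsTo (f i) S S)
    (hD : ∀ i, Set.MapsTo (f i) D D) (hpS : ball p r ⊆ S) (hSD : S ∩ ball q r ⊆ D)
    (hDp : Disjoint D (ball p r)) : ¬ HasAvgShadowing f := by
  intro hshad
  obtain ⟨δ, hδ, hsh⟩ := hshad (r / 2) (by positivity)
  obtain ⟨z, σ, hlim⟩ := hsh _ (isAvgPseudoOrbit_blockSeq j hp hq hδ)
  have hdiam (x y : X) : dist x y ≤ diam (Set.univ : Set X) :=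
    dist_le_diam_of_mem (Bornology.isBounded_univ.2 ‹_›) (Set.mem_univ x) (Set.mem_univ y)
  obtain ⟨N, hN⟩ := eventually_atTop.1 <| eventually_lt_of_limsup_lt hlim <|
    isBoundedUnder_le_average diam_nonneg fun i => hdiam _ _
  have hvisit (k : ℕ) (hk : N ≤ 4 ^ (k + 1)) : ∃ i ∈ Finset.Ico (4 ^ k) (4 ^ (k + 1)),
      dist (IFSIter f σ i z) (if Even k then p else q) < r := by
    obtain ⟨i, hi, hlt⟩ := exists_mem_Ico_pow_four_lt (fun _ => dist_nonneg) hr.le hN hk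
    exact ⟨i, hi, by rwa [← blockSeq_of_mem_Ico hi]⟩
  have hN' (k : ℕ) : N ≤ 4 ^ (2 * N + k + 1) :=
    (Nat.lt_pow_self (by norm_num)).le.trans' (by omega)
  have heven : Even (2 * N) := even_two_mul N
  have heven₂ : Even (2 * N + 2) := ⟨N + 1, by ring⟩
  obtain ⟨i₁, hi₁, h₁⟩ := hvisit (2 * N) (hN' 0)
  obtain ⟨i₂, hi₂, h₂⟩ := hvisit (2 * N + 1) (hN' 1)
  obtain ⟨i₃, hi₃, h₃⟩ := hvisit (2 * N + 2) (hN' 2)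
  simp only [heven, heven₂, if_true, Nat.even_add_one, not_true_eq_false, if_false] at h₁ h₂ h₃
  simp only [Finset.mem_Ico] at hi₁ hi₂ hi₃
  have hS₂ : IFSIter f σ i₂ z ∈ S :=
    IFSIter_mem_of_mapsTo hS σ (hpS h₁) (hi₁.2.le.trans hi₂.1)
  have hD₃ : IFSIter f σ i₃ z ∈ D :=
    IFSIter_mem_of_mapsTo hD σ (hSD ⟨hS₂, h₂⟩) (hi₂.2.le.trans hi₃.1)
  exact Set.disjoint_left.1 hDp hD₃ h₃

end Shadowing

section RealIterates

theorem iterate_apply_eq_of_semiconjOn {α β : Type*} {g : β → β} {G : α → α} {π : α → β}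
    {s : Set α} (hG : Set.MapsTo G s s) (h : ∀ t ∈ s, g (π t) = π (G t)) {t : α} (ht : t ∈ s)
    (n : ℕ) : g^[n] (π t) = π (G^[n] t) := by
  induction n with
  | zero => rfl
  | succ n ih =>
    rw [Function.iterate_succ_apply', Function.iterate_succ_apply', ih, h _ (hG.iterate n ht)]

theorem tendsto_iterate_of_le_apply {g : ℝ → ℝ} (hg : Continuous g) {t q : ℝ} (htq : t ≤ q)
    (hle : ∀ s ∈ Set.Icc t q, s ≤ g s ∧ g s ≤ q) (hfix : ∀ s ∈ Set.Ico t q, g s ≠ s) :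
    Tendsto (fun n => g^[n] t) atTop (𝓝 q) := by
  have hmem (n : ℕ) : g^[n] t ∈ Set.Icc t q := by
    induction n with
    | zero => exact ⟨le_rfl, htq⟩
    | succ n ih =>
      rw [Function.iterate_succ_apply']
      exact ⟨ih.1.trans (hle _ ih).1, (hle _ ih).2⟩
  have hmono : Monotone fun n => g^[n] t := monotone_nat_of_le_succ fun n => by
    rw [Function.iterate_succ_apply']
    exact (hle _ (hmem n)).1
  have hbdd : BddAbove (Set.range fun n => g^[n] t) := ⟨q, by rintro _ ⟨n, rfl⟩; exact (hmem n).2⟩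
  have hlim := tendsto_atTop_ciSup hmono hbdd
  have hL : ⨆ n, g^[n] t ∈ Set.Icc t q :=
    ⟨(hmem 0).1.trans (le_ciSup hbdd 0), ciSup_le fun n => (hmem n).2⟩
  have hLq : ⨆ n, g^[n] t = q := by
    by_contra hne
    exact hfix _ ⟨hL.1, hL.2.lt_of_ne hne⟩ (isFixedPt_of_tendsto_iterate hlim hg.continuousAt)
  rwa [hLq] at hlim

end RealIterates

namespace UnitAddCircle

theorem exists_mem_Ico_coe_eq (x : UnitAddCircle) :
    ∃ t ∈ Set.Ico (0 : ℝ) 1, (t : UnitAddCircle) = x := by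
  obtain ⟨s, rfl⟩ := QuotientAddGroup.mk_surjective x
  exact ⟨Int.fract s, ⟨Int.fract_nonneg s, Int.fract_lt_one s⟩, AddCircle.coe_fract s⟩

theorem dist_coe_le_abs_sub (s t : ℝ) : dist (s : UnitAddCircle) t ≤ |s - t| := by
  rw [dist_eq_norm, ← AddCircle.coe_sub, UnitAddCircle.norm_eq]
  simpa using round_le (s - t) 0

theorem min_abs_sub_le_dist_coe (s t : ℝ) :
    min |s - t| (1 - |s - t|) ≤ dist (s : UnitAddCircle) t := by
  rw [dist_eq_norm, ← AddCircle.coe_sub, UnitAddCircle.norm_eq]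
  rcases eq_or_ne (round (s - t)) 0 with h | h
  · simp [h]
  · have h1 : (1 : ℝ) ≤ |(round (s - t) : ℝ)| := by exact_mod_cast Int.one_le_abs h
    have h2 := abs_sub_abs_le_abs_sub (round (s - t) : ℝ) (s - t)
    rw [abs_sub_comm (round (s - t) : ℝ)] at h2
    exact (min_le_right _ _).trans (by linarith)

variable {a r : ℝ}

theorem ball_zero_subset_image (hr : r ≤ a) :
    ball ((0 : ℝ) : UnitAddCircle) r ⊆ (↑) '' (Set.Icc 0 a ∪ Set.Ico (1 - r) 1) := by
  intro x hx
  obtain ⟨t, ⟨h0, h1⟩, rfl⟩ := exists_mem_Ico_coe_eq x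
  have hmin := (min_abs_sub_le_dist_coe t 0).trans_lt hx
  rw [sub_zero, abs_of_nonneg h0] at hmin
  refine ⟨t, ?_, rfl⟩
  rcases min_lt_iff.1 hmin with h | h
  · exact Or.inl ⟨h0, by linarith⟩
  · exact Or.inr ⟨by linarith, h1⟩

theorem image_inter_ball_subset (hra : 2 * r ≤ a) (hr1 : 2 * r ≤ 1 - a) :
    (↑) '' (Set.Icc 0 a ∪ Set.Ico (1 - r) 1) ∩ ball (a : UnitAddCircle) r ⊆
      (↑) '' Set.Icc (a - r) a := by
  rintro _ ⟨⟨t, ht, rfl⟩, hd⟩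
  have hr := pos_of_mem_ball hd
  have hmin := (min_abs_sub_le_dist_coe t a).trans_lt hd
  refine ⟨t, ?_, rfl⟩
  rcases ht with ⟨h0, hta⟩ | ⟨h1, ht1⟩
  · rw [abs_of_nonpos (by linarith)] at hmin
    rcases min_lt_iff.1 hmin with h | h
    · exact ⟨by linarith, hta⟩
    · linarith
  · rw [abs_of_nonneg (by linarith)] at hmin
    rcases min_lt_iff.1 hmin with h | h <;> linarith

theorem disjoint_image_ball_zero (hra : 2 * r ≤ a) (hr1 : r ≤ 1 - a) :
    Disjoint ((↑) '' Set.Icc (a - r) a : Set UnitAddCircle) (ball ((0 : ℝ) : UnitAddCircle) r) := by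
  refine Set.disjoint_left.2 ?_
  rintro _ ⟨t, ⟨hat, hta⟩, rfl⟩ hd
  have hmin := (min_abs_sub_le_dist_coe t 0).trans_lt hd
  rw [sub_zero, abs_of_nonneg (by linarith)] at hmin
  rcases min_lt_iff.1 hmin with h | h <;> linarith

end UnitAddCircle

section ExampleMaps

variable {a t : ℝ}

theorem continuous_exampleF (a : ℝ) (j : Fin 2) : Continuous (exampleF a j) := by
  fin_cases j <;>
  · refine Continuous.if_le (by fun_prop) (by fun_prop) continuous_id continuous_const ?_
    rintro x (rfl : x = a)
    ring

theorem exampleF_apply_zero (ha : 0 ≤ a) (j : Fin 2) : exampleF a j 0 = 0 := by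
  fin_cases j <;> simp [exampleF, ha]

theorem exampleF_apply_self (j : Fin 2) : exampleF a j a = a := by
  fin_cases j <;> simp [exampleF]

theorem le_exampleF_apply (j : Fin 2) (h0 : 0 ≤ t) (h1 : t ≤ 1) : t ≤ exampleF a j t := by
  fin_cases j <;> dsimp [exampleF] <;> split <;>
    nlinarith [mul_nonneg h0 h0, mul_nonneg (sub_nonneg.2 h1) h0]

theorem exampleF_apply_le (ha : a ≤ 1) (j : Fin 2) (h0 : 0 ≤ t) (hta : t ≤ a) :
    exampleF a j t ≤ a := by
  fin_cases j <;> simp [exampleF, hta] <;>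
    nlinarith [mul_nonneg (mul_nonneg (sub_nonneg.2 hta) (sub_nonneg.2 (hta.trans ha))) h0]

theorem exampleF_apply_le_two_sub (ha0 : 0 ≤ a) (ha1 : a ≤ 1) (j : Fin 2) (h0 : 0 ≤ t)
    (h1 : t ≤ 1) : exampleF a j t ≤ 2 - t := by
  fin_cases j <;> dsimp [exampleF] <;> split <;>
    nlinarith [mul_nonneg (sub_nonneg.2 h1) h0, mul_nonneg (mul_nonneg (sub_nonneg.2 h1) h0) h0]

theorem exampleF_zero_apply_lt_one (ha0 : 0 ≤ a) (ha1 : a < 1) (h0 : 0 ≤ t) (h1 : t < 1) :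
    exampleF a 0 t < 1 := by
  simp only [exampleF, Matrix.cons_val_zero]
  split <;> nlinarith [mul_pos (sub_pos.2 h1) (by linarith : 0 < 1 - t + a)]

theorem exampleF_zero_apply_le_one (ha0 : 0 ≤ a) (ha1 : a ≤ 1) (h0 : 0 ≤ t) (h1 : t ≤ 1) :
    exampleF a 0 t ≤ 1 := by
  simp only [exampleF, Matrix.cons_val_zero]
  split <;> nlinarith [mul_nonneg (sub_nonneg.2 h1) (by linarith : 0 ≤ 1 - t + a)]

theorem exampleF_zero_apply_ne (h0 : 0 < t) (h1 : t < 1) (hta : t ≠ a) : exampleF a 0 t ≠ t := by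
  simp only [exampleF, Matrix.cons_val_zero]
  split <;> intro h
  · exact mul_ne_zero (sub_ne_zero.2 hta.symm) h0.ne' (by linarith)
  · exact mul_ne_zero (sub_ne_zero.2 h1.ne') (sub_ne_zero.2 hta) (by linarith)

theorem tendsto_iterate_exampleF_zero_of_le (ha : a < 1) (h0 : 0 < t) (hta : t ≤ a) :
    Tendsto (fun n => (exampleF a 0)^[n] t) atTop (𝓝 a) :=
  tendsto_iterate_of_le_apply (continuous_exampleF a 0) hta
    (fun _ hs => ⟨le_exampleF_apply 0 (h0.le.trans hs.1) (hs.2.trans ha.le),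
      exampleF_apply_le ha.le 0 (h0.le.trans hs.1) hs.2⟩)
    fun _ hs => exampleF_zero_apply_ne (h0.trans_le hs.1) (hs.2.trans ha) hs.2.ne

theorem tendsto_iterate_exampleF_zero_of_lt (ha0 : 0 < a) (ha1 : a < 1) (hat : a < t)
    (h1 : t ≤ 1) : Tendsto (fun n => (exampleF a 0)^[n] t) atTop (𝓝 1) :=
  tendsto_iterate_of_le_apply (continuous_exampleF a 0) h1
    (fun _ hs => ⟨le_exampleF_apply 0 (by linarith [hs.1]) hs.2,
      exampleF_zero_apply_le_one ha0.le ha1.le (by linarith [hs.1]) hs.2⟩)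
    fun _ hs => exampleF_zero_apply_ne (by linarith [hs.1]) hs.2 (by linarith [hs.1])

theorem mapsTo_exampleF_zero_Ico (ha0 : 0 ≤ a) (ha1 : a < 1) :
    Set.MapsTo (exampleF a 0) (Set.Ico 0 1) (Set.Ico 0 1) :=
  fun _ hs => ⟨hs.1.trans (le_exampleF_apply 0 hs.1 hs.2.le),
    exampleF_zero_apply_lt_one ha0 ha1 hs.1 hs.2⟩

end ExampleMaps

section Example

variable {a : ℝ} {f : Fin 2 → UnitAddCircle → UnitAddCircle}

theorem iterate_apply_coe_eq (ha0 : 0 ≤ a) (ha1 : a < 1)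
    (hind : ∀ t ∈ Set.Ico (0 : ℝ) 1, f 0 t = exampleF a 0 t) {t : ℝ} (ht : t ∈ Set.Ico 0 1)
    (n : ℕ) : (f 0)^[n] t = ((exampleF a 0)^[n] t : ℝ) :=
  iterate_apply_eq_of_semiconjOn (mapsTo_exampleF_zero_Ico ha0 ha1) hind ht n

theorem chainReaches_coe_of_tendsto (ha0 : 0 ≤ a) (ha1 : a < 1)
    (hind : ∀ t ∈ Set.Ico (0 : ℝ) 1, f 0 t = exampleF a 0 t) {t s : ℝ} (ht : t ∈ Set.Ico 0 1)
    (h : Tendsto (fun n => (exampleF a 0)^[n] t) atTop (𝓝 s)) :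
    ChainReaches f (t : UnitAddCircle) s :=
  chainReaches_of_tendsto_iterate 0 <| (((AddCircle.continuous_mk' 1).tendsto s).comp h).congr
    fun n => (iterate_apply_coe_eq ha0 ha1 hind ht n).symm

theorem chainReaches_coe_of_tendsto_nhdsGT (ha0 : 0 ≤ a) (ha1 : a < 1)
    (hind : ∀ t ∈ Set.Ico (0 : ℝ) 1, f 0 t = exampleF a 0 t) {p t q : ℝ}
    (hp : p ∈ Set.Ico 0 1) (hfix : exampleF a 0 p = p) (hpt : p ≤ t) (htq : t < q)
    (hlim : ∀ᶠ w in 𝓝[>] p, w < 1 ∧ Tendsto (fun n => (exampleF a 0)^[n] w) atTop (𝓝 q)) :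
    ChainReaches f (p : UnitAddCircle) t := by
  intro ε hε
  obtain ⟨w, ⟨hw1, hw⟩, hpw, hwε⟩ := (hlim.and (Ioo_mem_nhdsGT (by linarith : p < p + ε))).exists
  obtain ⟨N, hN⟩ := eventually_atTop.1 (hw.eventually (eventually_ge_nhds htq))
  obtain ⟨v, hv, hvt⟩ := intermediate_value_Icc hpw.le
    ((continuous_exampleF a 0).iterate (N + 1)).continuousOn
    ⟨(Function.iterate_fixed hfix _).trans_le hpt, hN (N + 1) N.le_succ⟩
  have hjump : dist (f 0 p) (v : UnitAddCircle) ≤ ε := by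
    rw [hind p hp, hfix]
    exact (UnitAddCircle.dist_coe_le_abs_sub p v).trans
      (by rw [abs_le]; constructor <;> linarith [hv.1, hv.2])
  have hchain := (isEpsChain_single 0 hjump).trans (isEpsChain_iterate 0 hε.le N)
  rwa [iterate_apply_coe_eq ha0 ha1 hind ⟨hp.1.trans hv.1, hv.2.trans_lt hw1⟩, hvt] at hchain

theorem chainRecurrentPt_exampleF (ha0 : 0 < a) (ha1 : a < 1)
    (hind : ∀ t ∈ Set.Ico (0 : ℝ) 1, f 0 t = exampleF a 0 t) (x : UnitAddCircle) :
    ChainRecurrentPt f x := by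
  have hIco {t : ℝ} (h0 : 0 ≤ t) (h1 : t < 1) : t ∈ Set.Ico (0 : ℝ) 1 := ⟨h0, h1⟩
  have toA {t : ℝ} (h0 : 0 < t) (hta : t ≤ a) : ChainReaches f (t : UnitAddCircle) a :=
    chainReaches_coe_of_tendsto ha0.le ha1 hind (hIco h0.le (hta.trans_lt ha1))
      (tendsto_iterate_exampleF_zero_of_le ha1 h0 hta)
  have toZero {t : ℝ} (hat : a < t) (h1 : t < 1) : ChainReaches f (t : UnitAddCircle) 0 := by
    simpa [AddCircle.coe_period] using chainReaches_coe_of_tendsto ha0.le ha1 hind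
      (hIco (ha0.trans hat).le h1)
      (tendsto_iterate_exampleF_zero_of_lt ha0 ha1 hat h1.le)
  have fromZero {t : ℝ} (h0 : 0 ≤ t) (hta : t < a) : ChainReaches f 0 (t : UnitAddCircle) := by
    simpa using chainReaches_coe_of_tendsto_nhdsGT ha0.le ha1 hind (hIco le_rfl one_pos)
      (exampleF_apply_zero ha0.le 0) h0 hta <| by
        filter_upwards [Ioc_mem_nhdsGT ha0] with w hw
        exact ⟨hw.2.trans_lt ha1, tendsto_iterate_exampleF_zero_of_le ha1 hw.1 hw.2⟩
  have fromA {t : ℝ} (hat : a ≤ t) (h1 : t < 1) : ChainReaches f (a : UnitAddCircle) t :=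
    chainReaches_coe_of_tendsto_nhdsGT ha0.le ha1 hind (hIco ha0.le ha1)
      (exampleF_apply_self 0) hat h1 <| by
        filter_upwards [Ioo_mem_nhdsGT ha1] with w hw
        exact ⟨hw.2, tendsto_iterate_exampleF_zero_of_lt ha0 ha1 hw.1 hw.2.le⟩
  have zero_a : ChainReaches f 0 (a : UnitAddCircle) :=
    (fromZero (by positivity) (half_lt_self ha0)).trans (toA (half_pos ha0) (half_le_self ha0.le))
  have a_zero : ChainReaches f (a : UnitAddCircle) 0 :=
    (fromA (t := (1 + a) / 2) (by linarith) (by linarith)).trans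
      (toZero (by linarith) (by linarith))
  obtain ⟨t, ⟨h0, h1⟩, rfl⟩ := UnitAddCircle.exists_mem_Ico_coe_eq x
  have hto : ChainReaches f (t : UnitAddCircle) 0 := by
    rcases h0.eq_or_lt with rfl | h0
    · simpa using zero_a.trans a_zero
    rcases le_or_gt t a with hta | hat
    · exact (toA h0 hta).trans a_zero
    · exact toZero hat h1
  have hfrom : ChainReaches f 0 (t : UnitAddCircle) := by
    rcases lt_or_ge t a with hta | hat
    · exact fromZero h0 hta
    · exact zero_a.trans (fromA hat h1)
  exact hto.trans hfrom

/-- Points of `[1 - r, 1)` leaving it wrap around into `[0, r] ⊆ [0, a]`. -/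
theorem not_hasAvgShadowing_exampleF (ha0 : 0 < a) (ha1 : a < 1)
    (hind : ∀ j, ∀ t ∈ Set.Ico (0 : ℝ) 1, f j t = exampleF a j t) : ¬ HasAvgShadowing f := by
  obtain ⟨r, hr, hra, hr1⟩ : ∃ r : ℝ, 0 < r ∧ 2 * r ≤ a ∧ 2 * r ≤ 1 - a :=
    ⟨min a (1 - a) / 2, half_pos (lt_min ha0 (by linarith)), by linarith [min_le_left a (1 - a)],
      by linarith [min_le_right a (1 - a)]⟩
  have hS (j : Fin 2) : Set.MapsTo (f j) ((↑) '' (Set.Icc 0 a ∪ Set.Ico (1 - r) 1))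
      ((↑) '' (Set.Icc 0 a ∪ Set.Ico (1 - r) 1)) := by
    rintro _ ⟨t, ht, rfl⟩
    rcases ht with ⟨h0, hta⟩ | ⟨h1, ht1⟩
    · rw [hind j t ⟨h0, hta.trans_lt ha1⟩]
      exact ⟨_, Or.inl ⟨h0.trans (le_exampleF_apply j h0 (hta.trans ha1.le)),
        exampleF_apply_le ha1.le j h0 hta⟩, rfl⟩
    have h0 : 0 ≤ t := by linarith
    rw [hind j t ⟨h0, ht1⟩]
    have hle := le_exampleF_apply (a := a) j h0 ht1.le
    by_cases hF : exampleF a j t < 1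
    · exact ⟨_, Or.inr ⟨h1.trans hle, hF⟩, rfl⟩
    · refine ⟨exampleF a j t - 1, Or.inl ⟨by linarith, ?_⟩, by simp [AddCircle.coe_period]⟩
      linarith [exampleF_apply_le_two_sub ha0.le ha1.le j h0 ht1.le]
  have hD (j : Fin 2) : Set.MapsTo (f j) ((↑) '' Set.Icc (a - r) a) ((↑) '' Set.Icc (a - r) a) := by
    rintro _ ⟨t, ⟨hat, hta⟩, rfl⟩
    have h0 : 0 ≤ t := by linarith
    rw [hind j t ⟨h0, hta.trans_lt ha1⟩]
    exact ⟨_, ⟨hat.trans (le_exampleF_apply j h0 (hta.trans ha1.le)),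
      exampleF_apply_le ha1.le j h0 hta⟩, rfl⟩
  have hfix (j : Fin 2) {p : ℝ} (hp : p ∈ Set.Ico (0 : ℝ) 1) (hF : exampleF a j p = p) :
      f j p = p := by rw [hind j p hp, hF]
  exact not_hasAvgShadowing_of_trap 0 (hfix 0 ⟨le_rfl, one_pos⟩ (exampleF_apply_zero ha0.le 0))
    (hfix 0 ⟨ha0.le, ha1⟩ (exampleF_apply_self 0)) hr hS hD
    (UnitAddCircle.ball_zero_subset_image (by linarith))
    (UnitAddCircle.image_inter_ball_subset hra hr1)
    (UnitAddCircle.disjoint_image_ball_zero hra (by linarith))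

end Example

theorem example_chainRecurrent_not_avgShadowing_general
    (a : ℝ) (ha0 : 0 < a) (ha1 : a < 1)
    (f : Fin 2 → AddCircle (1 : ℝ) → AddCircle (1 : ℝ))
    (hind : ∀ i : Fin 2, ∀ t ∈ Set.Ico (0 : ℝ) 1,
      f i ((t : ℝ) : AddCircle (1 : ℝ)) = ((exampleF a i t : ℝ) : AddCircle (1 : ℝ))) :
    ¬ HasAvgShadowing f ∧ ∀ x : AddCircle (1 : ℝ), ChainRecurrentPt f x :=
  ⟨not_hasAvgShadowing_exampleF ha0 ha1 hind, chainRecurrentPt_exampleF ha0 ha1 (hind 0)⟩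

/-- the IFS on the circle `ℝ/ℤ` induced by the two maps `exampleF a`
does not have the average shadowing property, yet every point of the circle is chain
recurrent for it. -/
theorem example_chainRecurrent_not_avgShadowing
    (a : ℝ) (ha0 : 0 < a) (ha1 : a < 1)
    (f : Fin 2 → AddCircle (1 : ℝ) → AddCircle (1 : ℝ))
    (hfc : ∀ i : Fin 2, Continuous (f i))
    (hind : ∀ i : Fin 2, ∀ t ∈ Set.Ico (0 : ℝ) 1,
      f i ((t : ℝ) : AddCircle (1 : ℝ)) = ((exampleF a i t : ℝ) : AddCircle (1 : ℝ))) :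
    ¬ HasAvgShadowing f ∧ ∀ x : AddCircle (1 : ℝ), ChainRecurrentPt f x :=
  example_chainRecurrent_not_avgShadowing_general a ha0 ha1 f hind
end
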